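/- arXiv:1804.08544 — 7 statements merged into one kernel-verified Lean document; each statement's English description precedes it below -/
import Mathlib

section
/- Under the homotopy CGM for affinely constrained problems with exact linear minimization oracle, for every k ≥ 1 the iterate x_{k+1} satisfies the smoothed-gap bound F_{β_k}(x_{k+1}) − f⋆ ≤ 2 D² ( L_f/(k+1) + ‖A‖²/(β₀ √(k+1)) ). -/
/-!
Let `x⋆` be a feasible minimiser and `r z = z - proj_K z`, so that `dist(z, K)² = ‖r z‖²`.
Minimality of the projection gives the quadratic upper bound
`‖r w‖² ≤ ‖r z‖² + 2⟪r z, w - z⟫ + ‖w - z‖²`, and the variational inequality for the projection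
onto the convex set `K` gives `⟪r (A x), A x⋆ - A x⟫ ≤ -‖r (A x)‖²`. Together with the descent
lemma for `f`, the gradient inequality of the convex `f`, and optimality of `s_k` for the linear
model `v_k` compared with `x⋆`, this yields the one-step bound
`F_{β_k}(x_{k+1}) - f⋆ ≤ (1 - η_k)(f(x_k) - f⋆) + (1 - 2η_k) ‖r (A x_k)‖² / (2β_k)
  + (L_f + ‖A‖² / β_k) η_k² D² / 2`.
Since `(1 - 2η_k) / β_k ≤ (1 - η_k) / β_{k-1}`, the right-hand side is at most `(1 - η_k)` times the
previous smoothed gap plus the error term, and the rate follows by induction on `k`; at `k = 1`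
the factor `1 - η_1` vanishes.
-/

open RealInnerProductSpace Set AffineMap Real

section Gradient

variable {E : Type*} [NormedAddCommGroup E] [InnerProductSpace ℝ E] [CompleteSpace E]
  {f : E → ℝ} {g : E} {x y : E}

theorem HasGradientAt.hasDerivAt_comp_lineMap {t : ℝ} (h : HasGradientAt f g (lineMap x y t)) :
    HasDerivAt (fun t ↦ f (lineMap x y t : E)) ⟪g, y - x⟫ t := by
  simpa [InnerProductSpace.toDual_apply_apply, Function.comp_def] using
    h.hasFDerivAt.comp_hasDerivAt t hasDerivAt_lineMap

theorem ConvexOn.add_inner_gradient_le {s : Set E} (hf : ConvexOn ℝ s f) (hx : x ∈ s) (hy : y ∈ s)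
    (hg : HasGradientAt f g x) : f x + ⟪g, y - x⟫ ≤ f y := by
  have hline : ConvexOn ℝ ((lineMap x y : ℝ → E) ⁻¹' s) (fun t ↦ f (lineMap x y t)) :=
    hf.comp_affineMap (lineMap x y : ℝ →ᵃ[ℝ] E)
  have hderiv : HasDerivAt (fun t : ℝ ↦ f (lineMap x y t)) ⟪g, y - x⟫ 0 :=
    HasGradientAt.hasDerivAt_comp_lineMap (by rwa [lineMap_apply_zero])
  have := hline.le_slope_of_hasDerivAt (x := 0) (y := 1) (by simpa using hx) (by simpa using hy)
    one_pos hderiv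
  simp only [slope_def_field, lineMap_apply_zero, lineMap_apply_one, sub_zero, div_one] at this
  linarith

theorem le_add_inner_gradient_add_sq {L : ℝ} {f' : E → E} (hf : ∀ u, HasGradientAt f (f' u) u)
    (hlip : ∀ u v, ‖f' u - f' v‖ ≤ L * ‖u - v‖) (x y : E) :
    f y ≤ f x + ⟪f' x, y - x⟫ + L / 2 * ‖y - x‖ ^ 2 := by
  set φ : ℝ → ℝ := fun t ↦ f (lineMap x y t : E) - t * ⟪f' x, y - x⟫ - L / 2 * t ^ 2 * ‖y - x‖ ^ 2
  have hφ : ∀ t, HasDerivAt φ (⟪f' (lineMap x y t) - f' x, y - x⟫ - L * t * ‖y - x‖ ^ 2) t := by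
    intro t
    have := (((hf (lineMap x y t)).hasDerivAt_comp_lineMap).sub
      ((hasDerivAt_id t).mul_const ⟪f' x, y - x⟫)).sub
      (((hasDerivAt_pow 2 t).const_mul (L / 2)).mul_const (‖y - x‖ ^ 2))
    exact this.congr_deriv (by rw [inner_sub_left]; ring)
  have hanti : AntitoneOn φ (Icc 0 1) := by
    refine antitoneOn_of_hasDerivWithinAt_nonpos (convex_Icc 0 1)
      (fun t _ ↦ (hφ t).continuousAt.continuousWithinAt) (fun t _ ↦ (hφ t).hasDerivWithinAt) ?_
    intro t ht
    rw [interior_Icc] at ht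
    rw [sub_nonpos]
    have hdist : ‖lineMap x y t - x‖ = t * ‖y - x‖ := by
      rw [← dist_eq_norm, dist_lineMap_left, Real.norm_of_nonneg ht.1.le, dist_eq_norm']
    calc ⟪f' (lineMap x y t) - f' x, y - x⟫
        ≤ ‖f' (lineMap x y t) - f' x‖ * ‖y - x‖ := real_inner_le_norm _ _
      _ ≤ L * (t * ‖y - x‖) * ‖y - x‖ := by
          rw [← hdist]; exact mul_le_mul_of_nonneg_right (hlip _ _) (norm_nonneg _)
      _ = L * t * ‖y - x‖ ^ 2 := by ring
  have := hanti (left_mem_Icc.2 zero_le_one) (right_mem_Icc.2 zero_le_one) zero_le_one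
  simp only [φ, lineMap_apply_zero, lineMap_apply_one] at this
  linarith

end Gradient

theorem Metric.infDist_eq_dist_of_forall_dist_le {α : Type*} [PseudoMetricSpace α] {K : Set α}
    {z p : α} (hp : p ∈ K) (hmin : ∀ y ∈ K, dist z p ≤ dist z y) : infDist z K = dist z p :=
  le_antisymm (infDist_le_dist_of_mem hp) ((le_infDist ⟨p, hp⟩).2 hmin)

section Projection

variable {F : Type*} [NormedAddCommGroup F] [InnerProductSpace ℝ F] {K : Set F} {z p : F}

theorem inner_sub_le_neg_norm_sq_of_forall_dist_le (hK : Convex ℝ K) (hp : p ∈ K)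
    (hmin : ∀ y ∈ K, dist z p ≤ dist z y) {y : F} (hy : y ∈ K) :
    ⟪z - p, y - z⟫ ≤ -‖z - p‖ ^ 2 := by
  have hinf : ‖z - p‖ = ⨅ w : K, ‖z - w‖ := by
    simpa only [dist_eq_norm] using
      (Metric.infDist_eq_dist_of_forall_dist_le hp hmin).symm.trans Metric.infDist_eq_iInf
  have hvar := (norm_eq_iInf_iff_real_inner_le_zero hK hp).1 hinf y hy
  have hsplit : y - z = (y - p) - (z - p) := by abel
  rw [hsplit, inner_sub_right, real_inner_self_eq_norm_sq]
  linarith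

theorem norm_sub_sq_le_of_forall_dist_le {w q : F} (hp : p ∈ K)
    (hmin : ∀ y ∈ K, dist w q ≤ dist w y) :
    ‖w - q‖ ^ 2 ≤ ‖z - p‖ ^ 2 + 2 * ⟪z - p, w - z⟫ + ‖w - z‖ ^ 2 := by
  have hle : ‖w - q‖ ≤ ‖w - p‖ := by simpa only [dist_eq_norm] using hmin p hp
  calc ‖w - q‖ ^ 2 ≤ ‖w - p‖ ^ 2 := by gcongr
    _ = ‖(z - p) + (w - z)‖ ^ 2 := by congr 2; abel
    _ = _ := norm_add_sq_real _ _

end Projection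

section Step

variable {E F : Type*} [NormedAddCommGroup E] [InnerProductSpace ℝ E] [CompleteSpace E]
  [NormedAddCommGroup F] [InnerProductSpace ℝ F] [CompleteSpace F]

theorem homotopyCGM_step_le {f : E → ℝ} {f' : E → E} {L : ℝ} (hL : 0 ≤ L)
    (hf_cvx : ConvexOn ℝ univ f) (hf_grad : ∀ u, HasGradientAt f (f' u) u)
    (hf'_lip : ∀ u v, ‖f' u - f' v‖ ≤ L * ‖u - v‖)
    (A : E →L[ℝ] F) {K : Set F} (hK : Convex ℝ K) {P : F → F}
    (hP : ∀ z, P z ∈ K ∧ ∀ y ∈ K, dist z (P z) ≤ dist z y)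
    {x s xstar : E} (hxstar : A xstar ∈ K) {β η D : ℝ} (hβ : 0 < β) (hη : 0 ≤ η)
    (hsx : ‖s - x‖ ≤ D)
    (hlmo : ⟪β • f' x + ContinuousLinearMap.adjoint A (A x - P (A x)), s⟫
      ≤ ⟪β • f' x + ContinuousLinearMap.adjoint A (A x - P (A x)), xstar⟫) :
    f (x + η • (s - x)) + ‖A (x + η • (s - x)) - P (A (x + η • (s - x)))‖ ^ 2 / (2 * β)
      ≤ f x + η * (f xstar - f x) + (1 - 2 * η) * ‖A x - P (A x)‖ ^ 2 / (2 * β)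
        + (L + ‖A‖ ^ 2 / β) * η ^ 2 * D ^ 2 / 2 := by
  set y := x + η • (s - x)
  set r := A x - P (A x)
  have hf_up : f y ≤ f x + η * ⟪f' x, s - x⟫ + L / 2 * (η ^ 2 * ‖s - x‖ ^ 2) := by
    have := le_add_inner_gradient_add_sq hf_grad hf'_lip x y
    rwa [add_sub_cancel_left, real_inner_smul_right, norm_smul, mul_pow, Real.norm_eq_abs,
      sq_abs] at this
  have hdist_up : ‖A y - P (A y)‖ ^ 2 ≤ ‖r‖ ^ 2 + 2 * (η * ⟪r, A (s - x)⟫)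
      + η ^ 2 * ‖A (s - x)‖ ^ 2 := by
    have := norm_sub_sq_le_of_forall_dist_le (z := A x) (hP (A x)).1 (hP (A y)).2
    rwa [← map_sub, add_sub_cancel_left, map_smul, real_inner_smul_right, norm_smul, mul_pow,
      Real.norm_eq_abs, sq_abs] at this
  have hlin : β * ⟪f' x, s - x⟫ + ⟪r, A (s - x)⟫ ≤ β * (f xstar - f x) - ‖r‖ ^ 2 := by
    have hconv : ⟪f' x, xstar - x⟫ ≤ f xstar - f x := by
      linarith [hf_cvx.add_inner_gradient_le (mem_univ x) (mem_univ xstar) (hf_grad x)]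
    have hfeas : ⟪r, A (xstar - x)⟫ ≤ -‖r‖ ^ 2 := by
      simpa only [map_sub] using
        inner_sub_le_neg_norm_sq_of_forall_dist_le hK (hP (A x)).1 (hP (A x)).2 hxstar
    have hconv' := mul_le_mul_of_nonneg_left hconv hβ.le
    simp only [inner_add_left, real_inner_smul_left, ContinuousLinearMap.adjoint_inner_left]
      at hlmo
    simp only [map_sub, inner_sub_right] at hconv' hfeas ⊢
    linarith
  have hAsx : ‖A (s - x)‖ ^ 2 ≤ ‖A‖ ^ 2 * D ^ 2 := by
    rw [← mul_pow]; gcongr; exact A.le_opNorm_of_le hsx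
  calc f y + ‖A y - P (A y)‖ ^ 2 / (2 * β)
      ≤ f x + η * ⟪f' x, s - x⟫ + L / 2 * (η ^ 2 * D ^ 2)
        + (‖r‖ ^ 2 + 2 * (η * ⟪r, A (s - x)⟫) + η ^ 2 * (‖A‖ ^ 2 * D ^ 2)) / (2 * β) := by
        gcongr
        · exact hf_up.trans (by gcongr)
        · exact hdist_up.trans (by gcongr)
    _ = f x + η / β * (β * ⟪f' x, s - x⟫ + ⟪r, A (s - x)⟫) + ‖r‖ ^ 2 / (2 * β)
        + (L + ‖A‖ ^ 2 / β) * η ^ 2 * D ^ 2 / 2 := by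
        field_simp; ring
    _ ≤ f x + η / β * (β * (f xstar - f x) - ‖r‖ ^ 2) + ‖r‖ ^ 2 / (2 * β)
        + (L + ‖A‖ ^ 2 / β) * η ^ 2 * D ^ 2 / 2 := by gcongr
    _ = _ := by field_simp; ring

end Step

theorem mul_sqrt_le_mul_sqrt {a b x y : ℝ} (hb : 0 ≤ b) (h : a ^ 2 * x ≤ b ^ 2 * y) :
    a * √x ≤ b * √y :=
  calc a * √x ≤ |a| * √x := by gcongr; exact le_abs_self a
    _ = √(a ^ 2 * x) := by rw [sqrt_mul (sq_nonneg a), sqrt_sq_eq_abs]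
    _ ≤ √(b ^ 2 * y) := sqrt_le_sqrt h
    _ = b * √y := by rw [sqrt_mul (sq_nonneg b), sqrt_sq hb]

section Schedule

/- With `t = k + 1`: `2 / (t + 1) = η_{k+1}`, `β₀ / √t = β_k` and `β₀ / √(t + 1) = β_{k+1}`. -/

variable {t : ℝ}

theorem smoothing_weight_le (ht : 1 ≤ t) :
    (1 - 2 * (2 / (t + 1))) * √(t + 1) ≤ (1 - 2 / (t + 1)) * √t := by
  have key : (t - 3) * √(t + 1) ≤ (t - 1) * √t := by
    rcases le_or_gt t 3 with h3 | h3
    · exact (mul_nonpos_of_nonpos_of_nonneg (by linarith) (sqrt_nonneg _)).trans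
        (mul_nonneg (by linarith) (sqrt_nonneg _))
    · exact mul_sqrt_le_mul_sqrt (by linarith) (by nlinarith)
  have ht1 : 0 < t + 1 := by linarith
  calc (1 - 2 * (2 / (t + 1))) * √(t + 1) = (t - 3) * √(t + 1) / (t + 1) := by field_simp; ring
    _ ≤ (t - 1) * √t / (t + 1) := div_le_div_of_nonneg_right key ht1.le
    _ = (1 - 2 / (t + 1)) * √t := by field_simp; ring

theorem lipschitz_term_recursion (ht : 0 < t) :
    (1 - 2 / (t + 1)) * (2 / t) + (2 / (t + 1)) ^ 2 / 2 ≤ 2 / (t + 1) := by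
  field_simp
  nlinarith

theorem smoothing_term_recursion (ht : 1 ≤ t) :
    (1 - 2 / (t + 1)) * (2 / √t) + √(t + 1) * (2 / (t + 1)) ^ 2 / 2 ≤ 2 / √(t + 1) := by
  have hv : √(t + 1) ^ 2 = t + 1 := sq_sqrt (by linarith)
  have hu0 : 0 < √t := sqrt_pos.2 (by linarith)
  have key : (t - 1) * √(t + 1) ≤ t * √t := mul_sqrt_le_mul_sqrt (by linarith) (by nlinarith)
  field_simp
  nlinarith [mul_le_mul_of_nonneg_left key (by linarith : (0 : ℝ) ≤ t + 1)]

end Schedule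

theorem homotopyCGM_gap_le_of_step {a q : ℕ → ℝ} {L M D β₀ : ℝ} (hL : 0 ≤ L) (hM : 0 ≤ M)
    (hβ₀ : 0 < β₀) (hq : ∀ k, 0 ≤ q k)
    (hstep : ∀ k : ℕ, 1 ≤ k → a (k + 1) + q (k + 1) / (2 * (β₀ / √(k + 1)))
      ≤ (1 - 2 / (k + 1)) * a k + (1 - 2 * (2 / (k + 1))) * q k / (2 * (β₀ / √(k + 1)))
        + (L + M / (β₀ / √(k + 1))) * (2 / (k + 1)) ^ 2 * D ^ 2 / 2) :
    ∀ k : ℕ, 1 ≤ k → a (k + 1) + q (k + 1) / (2 * (β₀ / √(k + 1)))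
      ≤ 2 * D ^ 2 * (L / (k + 1) + M / (β₀ * √(k + 1))) := by
  intro k hk
  induction k, hk using Nat.le_induction with
  | base =>
    have h := hstep 1 le_rfl
    norm_num at h ⊢
    have hc : M / (β₀ / √2) = 2 * (M / (β₀ * √2)) := by
      field_simp; rw [sq_sqrt zero_le_two]
    have : 0 ≤ q 1 / (2 * (β₀ / √2)) := div_nonneg (hq 1) (by positivity)
    have : 0 ≤ L * D ^ 2 := by positivity
    have : 0 ≤ M / (β₀ * √2) * D ^ 2 := by positivity
    rw [hc, neg_div] at h
    linarith
  | succ k hk ih =>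
    set t : ℝ := k + 1 with ht_def
    have ht : 1 ≤ t := le_add_of_nonneg_left k.cast_nonneg
    have h := hstep (k + 1) (by omega)
    push_cast at h ⊢
    rw [← ht_def] at h ⊢
    set η := 2 / (t + 1)
    have hη : 0 ≤ 1 - η := by
      rw [sub_nonneg, div_le_one (by linarith)]; linarith
    have hweight : (1 - 2 * η) * q (k + 1) / (2 * (β₀ / √(t + 1)))
        ≤ (1 - η) * (q (k + 1) / (2 * (β₀ / √t))) := by
      have hw := mul_le_mul_of_nonneg_left (smoothing_weight_le ht)
        (div_nonneg (hq (k + 1)) (by positivity : 0 ≤ 2 * β₀))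
      calc (1 - 2 * η) * q (k + 1) / (2 * (β₀ / √(t + 1)))
          = q (k + 1) / (2 * β₀) * ((1 - 2 * η) * √(t + 1)) := by field_simp
        _ ≤ q (k + 1) / (2 * β₀) * ((1 - η) * √t) := hw
        _ = (1 - η) * (q (k + 1) / (2 * (β₀ / √t))) := by field_simp
    have hLip := mul_le_mul_of_nonneg_left (lipschitz_term_recursion (by linarith : 0 < t))
      (by positivity : 0 ≤ D ^ 2 * L)
    have hSmooth := mul_le_mul_of_nonneg_left (smoothing_term_recursion ht)
      (by positivity : 0 ≤ D ^ 2 * (M / β₀))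
    calc _ ≤ (1 - η) * a (k + 1) + (1 - 2 * η) * q (k + 1) / (2 * (β₀ / √(t + 1)))
          + (L + M / (β₀ / √(t + 1))) * η ^ 2 * D ^ 2 / 2 := h
      _ ≤ (1 - η) * (a (k + 1) + q (k + 1) / (2 * (β₀ / √t)))
          + (L + M / (β₀ / √(t + 1))) * η ^ 2 * D ^ 2 / 2 := by linarith
      _ ≤ (1 - η) * (2 * D ^ 2 * (L / t + M / (β₀ * √t)))
          + (L + M / (β₀ / √(t + 1))) * η ^ 2 * D ^ 2 / 2 := by gcongr
      _ = D ^ 2 * L * ((1 - η) * (2 / t) + η ^ 2 / 2)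
          + D ^ 2 * (M / β₀) * ((1 - η) * (2 / √t) + √(t + 1) * η ^ 2 / 2) := by
        field_simp; ring
      _ ≤ D ^ 2 * L * (2 / (t + 1)) + D ^ 2 * (M / β₀) * (2 / √(t + 1)) := add_le_add hLip hSmooth
      _ = 2 * D ^ 2 * (L / (t + 1) + M / (β₀ * √(t + 1))) := by field_simp

theorem stmt1_general
    (n d : ℕ)
    (X : Set (EuclideanSpace ℝ (Fin n)))
    (hX_cpt : IsCompact X) (hX_cvx : Convex ℝ X)
    (f : EuclideanSpace ℝ (Fin n) → ℝ)
    (f' : EuclideanSpace ℝ (Fin n) → EuclideanSpace ℝ (Fin n))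
    (hf_cvx : ConvexOn ℝ Set.univ f)
    (hf_grad : ∀ x, HasGradientAt f (f' x) x)
    (L_f : ℝ) (hLf : 0 ≤ L_f)
    (hf'_lip : ∀ x y, ‖f' x - f' y‖ ≤ L_f * ‖x - y‖)
    (A : EuclideanSpace ℝ (Fin n) →L[ℝ] EuclideanSpace ℝ (Fin d))
    (K : Set (EuclideanSpace ℝ (Fin d)))
    (hK_cvx : Convex ℝ K)
    (projK : EuclideanSpace ℝ (Fin d) → EuclideanSpace ℝ (Fin d))
    (hprojK : ∀ z, projK z ∈ K ∧ ∀ y ∈ K, dist z (projK z) ≤ dist z y)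
    (fstar : ℝ)
    (hfstar : IsLeast (f '' {x | x ∈ X ∧ A x ∈ K}) fstar)
    (β₀ : ℝ) (hβ₀ : 0 < β₀)
    (x s v : ℕ → EuclideanSpace ℝ (Fin n))
    (hx1 : x 1 ∈ X)
    (hv : ∀ k, 1 ≤ k → v k = (β₀ / Real.sqrt ((k:ℝ) + 1)) • f' (x k)
        + (ContinuousLinearMap.adjoint A) (A (x k) - projK (A (x k))))
    (hs_mem : ∀ k, 1 ≤ k → s k ∈ X)
    (hlmo : ∀ k, 1 ≤ k → ∀ z ∈ X, ⟪v k, s k⟫ ≤ ⟪v k, z⟫)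
    (hupd : ∀ k, 1 ≤ k → x (k + 1) = x k + (2 / ((k:ℝ) + 1)) • (s k - x k)) :
    ∀ k, 1 ≤ k →
      f (x (k + 1)) + (Metric.infDist (A (x (k + 1))) K) ^ 2 / (2 * (β₀ / Real.sqrt ((k:ℝ) + 1))) - fstar
        ≤ 2 * (Metric.diam X) ^ 2
            * (L_f / ((k:ℝ) + 1) + ‖A‖ ^ 2 / (β₀ * Real.sqrt ((k:ℝ) + 1))) := by
  obtain ⟨xstar, ⟨hxstar_X, hxstar_K⟩, rfl⟩ := hfstar.1
  have hdist : ∀ z, Metric.infDist z K = ‖z - projK z‖ := fun z ↦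
    (Metric.infDist_eq_dist_of_forall_dist_le (hprojK z).1 (hprojK z).2).trans (dist_eq_norm _ _)
  have hx_mem : ∀ k, 1 ≤ k → x k ∈ X := by
    intro k hk
    induction k, hk using Nat.le_induction with
    | base => exact hx1
    | succ k hk ih =>
      have hk' : (1 : ℝ) ≤ k := by exact_mod_cast hk
      rw [hupd k hk]
      refine hX_cvx.add_smul_sub_mem ih (hs_mem k hk) ⟨by positivity, ?_⟩
      rw [div_le_one (by positivity)]
      linarith
  have hrate := homotopyCGM_gap_le_of_step (a := fun k ↦ f (x k) - f xstar)
    (q := fun k ↦ ‖A (x k) - projK (A (x k))‖ ^ 2) (D := Metric.diam X) hLf (sq_nonneg ‖A‖) hβ₀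
    (fun k ↦ sq_nonneg _) ?step
  · intro k hk
    simp only [hdist]
    linarith [hrate k hk]
  intro k hk
  have hsx : ‖s k - x k‖ ≤ Metric.diam X := by
    rw [← dist_eq_norm]
    exact Metric.dist_le_diam_of_mem hX_cpt.isBounded (hs_mem k hk) (hx_mem k hk)
  have hstep := homotopyCGM_step_le hLf hf_cvx hf_grad hf'_lip A hK_cvx hprojK hxstar_K
    (β := β₀ / √(k + 1)) (η := 2 / (k + 1)) (by positivity) (by positivity) hsx
    (hv k hk ▸ hlmo k hk xstar hxstar_X)
  rw [← hupd k hk] at hstep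
  linarith

theorem stmt1
    (n d : ℕ)
    (X : Set (EuclideanSpace ℝ (Fin n)))
    (hX_ne : X.Nonempty) (hX_cpt : IsCompact X) (hX_cvx : Convex ℝ X)
    (f : EuclideanSpace ℝ (Fin n) → ℝ)
    (f' : EuclideanSpace ℝ (Fin n) → EuclideanSpace ℝ (Fin n))
    (hf_cvx : ConvexOn ℝ Set.univ f)
    (hf_grad : ∀ x, HasGradientAt f (f' x) x)
    (L_f : ℝ) (hLf : 0 ≤ L_f)
    (hf'_lip : ∀ x y, ‖f' x - f' y‖ ≤ L_f * ‖x - y‖)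
    (A : EuclideanSpace ℝ (Fin n) →L[ℝ] EuclideanSpace ℝ (Fin d))
    (K : Set (EuclideanSpace ℝ (Fin d)))
    (hK_ne : K.Nonempty) (hK_cl : IsClosed K) (hK_cvx : Convex ℝ K)
    (projK : EuclideanSpace ℝ (Fin d) → EuclideanSpace ℝ (Fin d))
    (hprojK : ∀ z, projK z ∈ K ∧ ∀ y ∈ K, dist z (projK z) ≤ dist z y)
    (fstar : ℝ)
    (hfstar : IsLeast (f '' {x | x ∈ X ∧ A x ∈ K}) fstar)
    (β₀ : ℝ) (hβ₀ : 0 < β₀)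
    (x s v : ℕ → EuclideanSpace ℝ (Fin n))
    (hx1 : x 1 ∈ X)
    (hv : ∀ k, 1 ≤ k → v k = (β₀ / Real.sqrt ((k:ℝ) + 1)) • f' (x k)
        + (ContinuousLinearMap.adjoint A) (A (x k) - projK (A (x k))))
    (hs_mem : ∀ k, 1 ≤ k → s k ∈ X)
    (hlmo : ∀ k, 1 ≤ k → ∀ z ∈ X, ⟪v k, s k⟫ ≤ ⟪v k, z⟫)
    (hupd : ∀ k, 1 ≤ k → x (k + 1) = x k + (2 / ((k:ℝ) + 1)) • (s k - x k)) :
    ∀ k, 1 ≤ k →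
      f (x (k + 1)) + (Metric.infDist (A (x (k + 1))) K) ^ 2 / (2 * (β₀ / Real.sqrt ((k:ℝ) + 1))) - fstar
        ≤ 2 * (Metric.diam X) ^ 2
            * (L_f / ((k:ℝ) + 1) + ‖A‖ ^ 2 / (β₀ * Real.sqrt ((k:ℝ) + 1))) :=
  stmt1_general n d X hX_cpt hX_cvx f f' hf_cvx hf_grad L_f hLf hf'_lip A K hK_cvx projK hprojK
    fstar hfstar β₀ hβ₀ x s v hx1 hv hs_mem hlmo hupd
end

section
/- Under the homotopy CGM with multiplicatively inexact linear minimization oracle of parameter δ ∈ (0,1], for every k ≥ 1 the iterate x_{k+1} satisfies the smoothed-gap bound F_{β_k}(x_{k+1}) − F⋆ ≤ (2/δ) ( (D² L_f + δ ℰ)/(δ k + 2) + D² ‖A‖² / (β₀ √(δ k + 2)) ), where ℰ = F(x₁) − F⋆. -/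
/-
Each iteration is a conditional-gradient step on the smoothed objective `F_β = f + g_β ∘ A`:
`v_k = β_k ∇F_{β_k}(x_k)`, since `∇g_β(z) = (z - prox_{βg}(z)) / β`. Convexity of `f`, the
subgradient inequality of the proximal point and the `δ`-inexact oracle compared against a
minimiser of `F` on `X` give, with `η = η_k`, `β = β_k`, `D = diam X`,

  `F_β(x_{k+1}) - F⋆ ≤ (1 - δη)(F_β(x_k) - F⋆) - δη ‖A x_k - prox(A x_k)‖² / (2β)
      + η² D² (L_f + ‖A‖² / β) / 2`.

Decreasing the smoothing from `β_{k-1}` to `β_k` raises `F_β(x_k)` by at most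
`(β_{k-1} - β_k) ‖A x_k - prox(A x_k)‖² / (2β_k²)`, which the negative term absorbs because
`(1 - δη_k) β_{k-1} ≤ β_k`. What remains is a scalar recursion for the smoothed gap, and the
claimed rate is checked to be a supersolution of it by induction on `k`.
-/

open RealInnerProductSpace Set Filter Topology

theorem le_of_forall_mem_Ioc_le_add_mul {a b c : ℝ} (h : ∀ t ∈ Ioc (0 : ℝ) 1, a ≤ b + t * c) :
    a ≤ b := by
  have hlim : Tendsto (fun t : ℝ => b + t * c) (𝓝[>] 0) (𝓝 b) := by
    have : Tendsto (fun t : ℝ => b + t * c) (𝓝 0) (𝓝 (b + 0 * c)) :=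
      (continuous_const.add (continuous_id.mul continuous_const)).tendsto 0
    simpa using this.mono_left nhdsWithin_le_nhds
  refine ge_of_tendsto hlim ?_
  filter_upwards [Ioc_mem_nhdsGT zero_lt_one] with t ht using h t ht

theorem mul_sqrt_le_mul_sqrt_s7 {a b c d : ℝ} (ha : 0 ≤ a) (hc : 0 ≤ c)
    (h : a ^ 2 * b ≤ c ^ 2 * d) : a * √b ≤ c * √d := by
  rw [← Real.sqrt_sq ha, ← Real.sqrt_sq hc, ← Real.sqrt_mul (sq_nonneg a),
    ← Real.sqrt_mul (sq_nonneg c)]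
  exact Real.sqrt_le_sqrt h

theorem IsCompact.biInf_le {α : Type*} [TopologicalSpace α] {X : Set α} (hX : IsCompact X)
    {φ : α → ℝ} (hφ : ContinuousOn φ X) {w : α} (hw : w ∈ X) : ⨅ z ∈ X, φ z ≤ φ w := by
  refine ciInf₂_le ((hX.bddBelow_image hφ).mono ?_) w hw
  rintro _ ⟨_, ⟨z, rfl⟩, ⟨hz, rfl⟩⟩
  exact mem_image_of_mem φ hz

theorem Convex.mem_of_add_smul_sub_recursion {E : Type*} [AddCommGroup E] [Module ℝ E]
    {X : Set E} (hX : Convex ℝ X) {x s : ℕ → E} {η : ℕ → ℝ} (hx1 : x 1 ∈ X)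
    (hs : ∀ k, 1 ≤ k → s k ∈ X) (hη : ∀ k, 1 ≤ k → η k ∈ Icc 0 1)
    (hupd : ∀ k, 1 ≤ k → x (k + 1) = x k + η k • (s k - x k)) : ∀ k, 1 ≤ k → x k ∈ X := by
  intro k hk
  induction k, hk using Nat.le_induction with
  | base => exact hx1
  | succ k hk ih => exact hupd k hk ▸ hX.add_smul_sub_mem ih (hs k hk) (hη k hk)

section MoreauEnvelope

variable {G : Type*} [NormedAddCommGroup G] {g : G → ℝ} {β : ℝ} {z p : G}

def IsProxPoint (g : G → ℝ) (β : ℝ) (z p : G) : Prop :=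
  ∀ y, g p + ‖z - p‖ ^ 2 / (2 * β) ≤ g y + ‖z - y‖ ^ 2 / (2 * β)

/-- In `ℝ` an infimum that is not bounded below is `0`; the envelope is only used at points that
have a proximal point, where `IsProxPoint.moreauEnvelope_eq` evaluates it. -/
noncomputable def moreauEnvelope (g : G → ℝ) (β : ℝ) (z : G) : ℝ :=
  ⨅ y, g y + ‖z - y‖ ^ 2 / (2 * β)

theorem IsProxPoint.moreauEnvelope_eq (hp : IsProxPoint g β z p) :
    moreauEnvelope g β z = g p + ‖z - p‖ ^ 2 / (2 * β) :=
  le_antisymm (ciInf_le ⟨_, forall_mem_range.2 hp⟩ p) (le_ciInf hp)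

theorem IsProxPoint.moreauEnvelope_le (hp : IsProxPoint g β z p) (y : G) :
    moreauEnvelope g β z ≤ g y + ‖z - y‖ ^ 2 / (2 * β) :=
  hp.moreauEnvelope_eq ▸ hp y

theorem IsProxPoint.moreauEnvelope_le_self (hp : IsProxPoint g β z p) :
    moreauEnvelope g β z ≤ g z := by
  simpa using hp.moreauEnvelope_le z

variable [InnerProductSpace ℝ G]

theorem IsProxPoint.inner_le (hg : ConvexOn ℝ univ g) (hβ : 0 < β) (hp : IsProxPoint g β z p)
    (w : G) :
    ⟪z - p, w - p⟫ ≤ β * (g w - g p) := by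
  refine le_of_forall_mem_Ioc_le_add_mul (c := ‖w - p‖ ^ 2 / 2) fun t ht => ?_
  have hconv : g (p + t • (w - p)) ≤ (1 - t) * g p + t * g w := by
    have h := hg.2 (mem_univ p) (mem_univ w) (sub_nonneg.2 ht.2) ht.1.le (by ring)
    rwa [show (1 - t) • p + t • w = p + t • (w - p) by module, smul_eq_mul, smul_eq_mul] at h
  have hnorm : ‖z - (p + t • (w - p))‖ ^ 2
      = ‖z - p‖ ^ 2 - 2 * t * ⟪z - p, w - p⟫ + t ^ 2 * ‖w - p‖ ^ 2 := by
    rw [show z - (p + t • (w - p)) = (z - p) - t • (w - p) by abel, norm_sub_sq_real,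
      real_inner_smul_right, norm_smul, mul_pow, Real.norm_eq_abs, sq_abs]
    ring
  have hmin := hp (p + t • (w - p))
  rw [hnorm] at hmin
  have key : 2 * t * ⟪z - p, w - p⟫ ≤ 2 * t * (β * (g w - g p) + t * (‖w - p‖ ^ 2 / 2)) := by
    have := mul_le_mul_of_nonneg_left hmin (by positivity : 0 ≤ 2 * β)
    field_simp at this
    nlinarith
  exact le_of_mul_le_mul_left key (by linarith [ht.1])

theorem IsProxPoint.inner_sub_le (hg : ConvexOn ℝ univ g) (hβ : 0 < β)
    (hp : IsProxPoint g β z p) (w : G) :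
    ⟪z - p, w - z⟫ ≤ β * (g w - moreauEnvelope g β z) - ‖z - p‖ ^ 2 / 2 := by
  have h := hp.inner_le hg hβ w
  rw [show w - p = (w - z) + (z - p) by abel, inner_add_right, real_inner_self_eq_norm_sq] at h
  rw [hp.moreauEnvelope_eq]
  field_simp
  linarith

theorem moreauEnvelope_le_add_inner {z' p' : G} (hp : IsProxPoint g β z p)
    (hp' : IsProxPoint g β z' p') :
    moreauEnvelope g β z'
      ≤ moreauEnvelope g β z + ⟪z - p, z' - z⟫ / β + ‖z' - z‖ ^ 2 / (2 * β) := by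
  have h := hp'.moreauEnvelope_le p
  rw [show z' - p = (z' - z) + (z - p) by abel, norm_add_sq_real, real_inner_comm] at h
  rw [hp.moreauEnvelope_eq]
  linarith [show (‖z' - z‖ ^ 2 + 2 * ⟪z - p, z' - z⟫ + ‖z - p‖ ^ 2) / (2 * β)
    = ‖z - p‖ ^ 2 / (2 * β) + ⟪z - p, z' - z⟫ / β + ‖z' - z‖ ^ 2 / (2 * β) by ring]

theorem moreauEnvelope_le_moreauEnvelope_add {a b : ℝ} {q : G} (hg : ConvexOn ℝ univ g)
    (ha : 0 < a) (hab : a ≤ b) (hp : IsProxPoint g a z p) (hq : IsProxPoint g b z q) :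
    moreauEnvelope g a z ≤ moreauEnvelope g b z + (b - a) * ‖z - p‖ ^ 2 / (2 * a ^ 2) := by
  have hb : 0 < b := ha.trans_le hab
  have hsub := hp.inner_le hg ha q
  rw [show q - p = (z - p) - (z - q) by abel, inner_sub_right, real_inner_self_eq_norm_sq] at hsub
  have hcs := real_inner_le_norm (z - p) (z - q)
  rw [hp.moreauEnvelope_eq, hq.moreauEnvelope_eq]
  set I := ⟪z - p, z - q⟫
  set P := ‖z - p‖
  set R := ‖z - q‖
  have hgq : (P ^ 2 - I) / a ≤ g q - g p := by rw [div_le_iff₀ ha]; linarith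
  have hsq : (P ^ 2 - I) / a - (P ^ 2 / (2 * a) - (b - a) * P ^ 2 / (2 * a ^ 2) - R ^ 2 / (2 * b))
      = (b * P - a * R) ^ 2 / (2 * a ^ 2 * b) + (P * R - I) / a := by
    field_simp
    ring
  have : 0 ≤ (b * P - a * R) ^ 2 / (2 * a ^ 2 * b) + (P * R - I) / a :=
    add_nonneg (by positivity) (div_nonneg (by linarith) ha.le)
  linarith

end MoreauEnvelope

section Gradient

variable {E : Type*} [NormedAddCommGroup E] [InnerProductSpace ℝ E] [CompleteSpace E]
  {f : E → ℝ} {x d : E}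

theorem HasGradientAt.hasDerivAt_comp_add_smul {f'' : E} {t : ℝ}
    (hf : HasGradientAt f f'' (x + t • d)) :
    HasDerivAt (fun t : ℝ => f (x + t • d)) ⟪f'', d⟫ t := by
  have hline : HasDerivAt (fun t : ℝ => x + t • d) d t := by
    simpa using ((hasDerivAt_id t).smul_const d).const_add x
  have h := hf.hasFDerivAt.comp_hasDerivAt t hline
  simp only [Function.comp_def, InnerProductSpace.toDual_apply_apply] at h
  exact h

theorem ConvexOn.inner_le_sub_of_hasGradientAt {f' : E} (hf : ConvexOn ℝ univ f)
    (hgrad : HasGradientAt f f' x) (y : E) : ⟪f', y - x⟫ ≤ f y - f x := by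
  have hline : f ∘ AffineMap.lineMap x y = fun t : ℝ => f (x + t • (y - x)) := by
    ext t
    simp [AffineMap.lineMap_apply_module', add_comm]
  have h := (hf.comp_affineMap (AffineMap.lineMap x y)).le_slope_of_hasDerivAt (mem_univ 0)
    (mem_univ 1) zero_lt_one (hline ▸ HasGradientAt.hasDerivAt_comp_add_smul (by simpa using hgrad))
  simpa [slope_def_field] using h

theorem le_add_inner_add_of_lipschitz_gradient {f' : E → E} {L : ℝ}
    (hgrad : ∀ x, HasGradientAt f (f' x) x) (hlip : ∀ x y, ‖f' x - f' y‖ ≤ L * ‖x - y‖)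
    (x y : E) : f y ≤ f x + ⟪f' x, y - x⟫ + L * ‖y - x‖ ^ 2 / 2 := by
  set d := y - x
  have hφ : ∀ t, HasDerivAt (fun t : ℝ => f (x + t • d)) ⟪f' (x + t • d), d⟫ t :=
    fun t => (hgrad _).hasDerivAt_comp_add_smul
  have hB : ∀ t : ℝ, HasDerivAt (fun t => f x + t * ⟪f' x, d⟫ + t ^ 2 * (L * ‖d‖ ^ 2 / 2))
      (⟪f' x, d⟫ + t * (L * ‖d‖ ^ 2)) t := by
    intro t
    refine ((((hasDerivAt_id t).mul_const ⟪f' x, d⟫).const_add (f x)).add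
      ((hasDerivAt_pow 2 t).mul_const (L * ‖d‖ ^ 2 / 2))).congr_deriv ?_
    simp only [Nat.cast_ofNat]
    ring
  have hbound : ∀ t ∈ Ico (0 : ℝ) 1, ⟪f' (x + t • d), d⟫ ≤ ⟪f' x, d⟫ + t * (L * ‖d‖ ^ 2) := by
    intro t ht
    have hlip_t : ‖f' (x + t • d) - f' x‖ ≤ L * (t * ‖d‖) := by
      simpa [norm_smul, abs_of_nonneg ht.1] using hlip (x + t • d) x
    calc ⟪f' (x + t • d), d⟫ = ⟪f' x, d⟫ + ⟪f' (x + t • d) - f' x, d⟫ := by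
          rw [inner_sub_left]; ring
      _ ≤ ⟪f' x, d⟫ + ‖f' (x + t • d) - f' x‖ * ‖d‖ := by gcongr; exact real_inner_le_norm _ _
      _ ≤ ⟪f' x, d⟫ + L * (t * ‖d‖) * ‖d‖ := by gcongr
      _ = ⟪f' x, d⟫ + t * (L * ‖d‖ ^ 2) := by ring
  have := image_le_of_deriv_right_le_deriv_boundary
    (fun t _ => (hφ t).continuousAt.continuousWithinAt) (fun t _ => (hφ t).hasDerivWithinAt)
    (by simp) (fun t _ => (hB t).continuousAt.continuousWithinAt)
    (fun t _ => (hB t).hasDerivWithinAt) hbound (right_mem_Icc.2 zero_le_one)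
  simpa [d] using this

end Gradient

section SmoothedGapStep

variable {E G : Type*} [NormedAddCommGroup E] [InnerProductSpace ℝ E] [CompleteSpace E]
  [NormedAddCommGroup G] [InnerProductSpace ℝ G] [CompleteSpace G] {f : E → ℝ}

theorem smoothed_gap_le_of_cgm_step {f' : E → E} {L : ℝ} (hf : ConvexOn ℝ univ f)
    (hgrad : ∀ x, HasGradientAt f (f' x) x) (hlip : ∀ x y, ‖f' x - f' y‖ ≤ L * ‖x - y‖)
    (hL : 0 ≤ L) {A : E →L[ℝ] G} {g : G → ℝ} (hg : ConvexOn ℝ univ g) {β : ℝ} (hβ : 0 < β)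
    {prox : G → G} (hprox : ∀ z, IsProxPoint g β z (prox z)) {x s w v : E} {δ η D : ℝ}
    (hδ : 0 ≤ δ) (hη : 0 ≤ η) (hv : v = β • f' x + ContinuousLinearMap.adjoint A (A x - prox (A x)))
    (hlmo : ⟪v, s - x⟫ ≤ δ * ⟪v, w - x⟫) (hD : ‖s - x‖ ≤ D) :
    f (x + η • (s - x)) + moreauEnvelope g β (A (x + η • (s - x))) - (f w + g (A w))
      ≤ (1 - δ * η) * (f x + moreauEnvelope g β (A x) - (f w + g (A w)))
        - δ * η * ‖A x - prox (A x)‖ ^ 2 / (2 * β)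
        + η ^ 2 * (D ^ 2 * L + D ^ 2 * ‖A‖ ^ 2 / β) / 2 := by
  set d := s - x
  set z := A x
  set p := prox z
  have hf_step : f (x + η • d) ≤ f x + η * ⟪f' x, d⟫ + L * (η * ‖d‖) ^ 2 / 2 := by
    have h := le_add_inner_add_of_lipschitz_gradient hgrad hlip x (x + η • d)
    rwa [add_sub_cancel_left, real_inner_smul_right, norm_smul, Real.norm_eq_abs,
      abs_of_nonneg hη] at h
  have hg_step : moreauEnvelope g β (A (x + η • d))
      ≤ moreauEnvelope g β z + η * ⟪z - p, A d⟫ / β + (η * ‖A d‖) ^ 2 / (2 * β) := by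
    have h := moreauEnvelope_le_add_inner (hprox z) (hprox (A (x + η • d)))
    rw [map_add, map_smul, add_sub_cancel_left, real_inner_smul_right, norm_smul,
      Real.norm_eq_abs, abs_of_nonneg hη] at h
    rwa [map_add, map_smul]
  have hv_inner : ∀ y, ⟪v, y⟫ = β * ⟪f' x, y⟫ + ⟪z - p, A y⟫ := fun y => by
    rw [hv, inner_add_left, real_inner_smul_left, ContinuousLinearMap.adjoint_inner_left]
  have hlin : β * ⟪f' x, d⟫ + ⟪z - p, A d⟫
      ≤ δ * (β * (f w - f x) + (β * (g (A w) - moreauEnvelope g β z) - ‖z - p‖ ^ 2 / 2)) := by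
    have hf_lin := hf.inner_le_sub_of_hasGradientAt (hgrad x) w
    have hg_lin := (hprox z).inner_sub_le hg hβ (A w)
    rw [← hv_inner]
    calc ⟪v, d⟫ ≤ δ * ⟪v, w - x⟫ := hlmo
      _ = δ * (β * ⟪f' x, w - x⟫ + ⟪z - p, A w - z⟫) := by rw [hv_inner, map_sub]
      _ ≤ _ := by gcongr
  have hlin' : η * ⟪f' x, d⟫ + η * ⟪z - p, A d⟫ / β
      ≤ δ * η * (f w + g (A w) - (f x + moreauEnvelope g β z))
        - δ * η * ‖z - p‖ ^ 2 / (2 * β) := by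
    calc η * ⟪f' x, d⟫ + η * ⟪z - p, A d⟫ / β = η / β * (β * ⟪f' x, d⟫ + ⟪z - p, A d⟫) := by
          field_simp
      _ ≤ η / β * (δ * (β * (f w - f x) + (β * (g (A w) - moreauEnvelope g β z)
          - ‖z - p‖ ^ 2 / 2))) := mul_le_mul_of_nonneg_left hlin (div_nonneg hη hβ.le)
      _ = _ := by
          field_simp
          ring
  have hAd : ‖A d‖ ≤ ‖A‖ * D := (A.le_opNorm d).trans (by gcongr)
  have hquad : L * (η * ‖d‖) ^ 2 / 2 + (η * ‖A d‖) ^ 2 / (2 * β)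
      ≤ η ^ 2 * (D ^ 2 * L + D ^ 2 * ‖A‖ ^ 2 / β) / 2 := by
    calc L * (η * ‖d‖) ^ 2 / 2 + (η * ‖A d‖) ^ 2 / (2 * β)
        ≤ L * (η * D) ^ 2 / 2 + (η * (‖A‖ * D)) ^ 2 / (2 * β) := by gcongr
      _ = η ^ 2 * (D ^ 2 * L + D ^ 2 * ‖A‖ ^ 2 / β) / 2 := by field_simp
  linarith

end SmoothedGapStep

noncomputable def cgmStepSize (δ : ℝ) (k : ℕ) : ℝ := 2 / (δ * ((k : ℝ) - 1) + 2)

noncomputable def cgmSmoothing (β₀ δ : ℝ) (k : ℕ) : ℝ := β₀ / √(δ * k + 1)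

noncomputable def cgmRate (δ β₀ M Q E : ℝ) (k : ℕ) : ℝ :=
  (2 / δ) * ((M + δ * E) / (δ * k + 2) + Q / (β₀ * √(δ * k + 2)))

section Schedule

variable {δ β₀ : ℝ}

theorem cgmStepSize_one : cgmStepSize δ 1 = 1 := by norm_num [cgmStepSize]

theorem cgmStepSize_succ (k : ℕ) : cgmStepSize δ (k + 1) = 2 / (δ * k + 2) := by
  simp [cgmStepSize]

theorem cgmStepSize_mem_Icc (hδ : 0 ≤ δ) {k : ℕ} (hk : 1 ≤ k) : cgmStepSize δ k ∈ Icc 0 1 := by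
  have hk' : (0 : ℝ) ≤ k - 1 := sub_nonneg.2 (by exact_mod_cast hk)
  have hden : 2 ≤ δ * ((k : ℝ) - 1) + 2 := by nlinarith
  exact ⟨by unfold cgmStepSize; positivity, by rw [cgmStepSize, div_le_one (by linarith)]; linarith⟩

theorem cgmSmoothing_pos (hδ : 0 ≤ δ) (hβ₀ : 0 < β₀) (k : ℕ) : 0 < cgmSmoothing β₀ δ k := by
  unfold cgmSmoothing; positivity

theorem cgmSmoothing_succ_le (hδ : 0 ≤ δ) (hβ₀ : 0 < β₀) (k : ℕ) :
    cgmSmoothing β₀ δ (k + 1) ≤ cgmSmoothing β₀ δ k := by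
  unfold cgmSmoothing
  gcongr
  nlinarith

theorem one_sub_mul_cgmStepSize_mul_cgmSmoothing_le (hδ0 : 0 < δ) (hδ1 : δ ≤ 1) (hβ₀ : 0 < β₀)
    {k : ℕ} (hk : 1 ≤ k) :
    (1 - δ * cgmStepSize δ (k + 1)) * cgmSmoothing β₀ δ k ≤ cgmSmoothing β₀ δ (k + 1) := by
  have hk' : (1 : ℝ) ≤ k := by exact_mod_cast hk
  rw [cgmStepSize_succ, cgmSmoothing, cgmSmoothing]
  set u := δ * k + 2 with hu
  have hu2 : δ + 2 ≤ u := by nlinarith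
  have hu0 : 0 < u := by linarith
  have e1 : δ * k + 1 = u - 1 := by ring
  have e2 : δ * ((k + 1 : ℕ) : ℝ) + 1 = u + δ - 1 := by push_cast; ring
  have hs : 0 < √(u - 1) := Real.sqrt_pos.2 (by linarith)
  have hs' : 0 < √(u + δ - 1) := Real.sqrt_pos.2 (by linarith)
  rw [e1, e2, show 1 - δ * (2 / u) = (u - 2 * δ) / u by field_simp,
    div_mul_div_comm, div_le_div_iff₀ (by positivity) hs']
  have key : (u - 2 * δ) * √(u + δ - 1) ≤ u * √(u - 1) :=
    mul_sqrt_le_mul_sqrt_s7 (by linarith) (by linarith)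
      (by nlinarith [mul_pos hδ0 (show 0 < 3 * u ^ 2 - 4 * u + 4 * δ - 4 * δ ^ 2 by nlinarith)])
  nlinarith

theorem cgmRate_one_ge {M Q E : ℝ} (hδ0 : 0 < δ) (hδ1 : δ ≤ 1) (hβ₀ : 0 < β₀) (hM : 0 ≤ M)
    (hQ : 0 ≤ Q) (hE : 0 ≤ E) :
    (1 - δ) * E + (M + Q / cgmSmoothing β₀ δ 1) / 2 ≤ cgmRate δ β₀ M Q E 1 := by
  simp only [cgmRate, cgmSmoothing, Nat.cast_one, mul_one]
  set s₁ := √(δ + 1)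
  set s₂ := √(δ + 2)
  have hs₁ : 0 < s₁ := Real.sqrt_pos.2 (by linarith)
  have hs₂ : 0 < s₂ := Real.sqrt_pos.2 (by linarith)
  have hs₁s₂ : (s₁ * s₂) ^ 2 = (δ + 1) * (δ + 2) := by
    rw [mul_pow, Real.sq_sqrt (by linarith), Real.sq_sqrt (by linarith)]
  have hrat : (1 - δ) * E + M / 2 ≤ (2 / δ) * ((M + δ * E) / (δ + 2)) := by
    rw [← sub_nonneg]
    have e : (2 / δ) * ((M + δ * E) / (δ + 2)) - ((1 - δ) * E + M / 2)
        = ((4 - δ * (δ + 2)) * M / 2 + (δ + δ ^ 2) * δ * E) / (δ * (δ + 2)) := by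
      field_simp
      ring
    have h₁ : 0 ≤ 4 - δ * (δ + 2) := by nlinarith
    rw [e]
    positivity
  have hsqrt : Q / (β₀ / s₁) / 2 ≤ (2 / δ) * (Q / (β₀ * s₂)) := by
    have hkey : δ * (s₁ * s₂) ≤ 4 := by nlinarith [sq_nonneg (s₁ * s₂ - 5 / 2)]
    rw [← sub_nonneg]
    have e : (2 / δ) * (Q / (β₀ * s₂)) - Q / (β₀ / s₁) / 2
        = Q * (4 - δ * (s₁ * s₂)) / (2 * δ * β₀ * s₂) := by
      field_simp
      ring
    rw [e]
    exact div_nonneg (mul_nonneg hQ (by linarith)) (by positivity)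
  linarith

theorem rate_rational_step {M E u : ℝ} (hδ0 : 0 < δ) (hu : δ + 2 ≤ u) (hM : 0 ≤ M)
    (hE : 0 ≤ E) :
    (1 - δ * (2 / u)) * ((2 / δ) * ((M + δ * E) / u)) + (2 / u) ^ 2 * M / 2
      ≤ (2 / δ) * ((M + δ * E) / (u + δ)) := by
  have hu0 : 0 < u := by linarith
  rw [← sub_nonneg]
  have e : (2 / δ) * ((M + δ * E) / (u + δ))
      - ((1 - δ * (2 / u)) * ((2 / δ) * ((M + δ * E) / u)) + (2 / u) ^ 2 * M / 2)
      = 2 * (M * δ + δ * E * (u + 2 * δ)) / (u ^ 2 * (u + δ)) := by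
    field_simp
    ring
  rw [e]
  positivity

theorem rate_sqrt_step {u : ℝ} (hδ0 : 0 < δ) (hδ1 : δ ≤ 1) (hu : δ + 2 ≤ u) :
    (1 - δ * (2 / u)) * ((2 / δ) / √u) + (2 / u) ^ 2 * √(u + δ - 1) / 2
      ≤ (2 / δ) / √(u + δ) := by
  have hu0 : 0 < u := by linarith
  have hs : 0 < √u := Real.sqrt_pos.2 hu0
  have ht : 0 < √(u + δ) := Real.sqrt_pos.2 (by linarith)
  have hsq : (2 / u) ^ 2 * √(u + δ - 1) / 2 ≤ 2 / (u * √u) := by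
    calc (2 / u) ^ 2 * √(u + δ - 1) / 2 ≤ (2 / u) ^ 2 * √u / 2 := by
          gcongr
          linarith
      _ = 2 / (u * √u) := by
          field_simp
          exact Real.sq_sqrt hu0.le
  have hkey : (u - δ) * √(u + δ) ≤ u * √u :=
    mul_sqrt_le_mul_sqrt_s7 (by linarith) hu0.le
      (by nlinarith [mul_pos hδ0 (show 0 < u ^ 2 + δ * u - δ ^ 2 by nlinarith)])
  have hmain : (1 - δ * (2 / u)) * ((2 / δ) / √u) + 2 / (u * √u)
      = (2 / δ) * ((u - δ) * √(u + δ)) / (u * √u * √(u + δ)) := by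
    field_simp
    ring
  have hfinal : (2 / δ) * ((u - δ) * √(u + δ)) / (u * √u * √(u + δ)) ≤ (2 / δ) / √(u + δ) := by
    rw [div_le_div_iff₀ (by positivity) ht]
    calc 2 / δ * ((u - δ) * √(u + δ)) * √(u + δ) ≤ 2 / δ * (u * √u) * √(u + δ) := by gcongr
      _ = 2 / δ * (u * √u * √(u + δ)) := by ring
  linarith

theorem cgmRate_succ_ge {M Q E : ℝ} (hδ0 : 0 < δ) (hδ1 : δ ≤ 1) (hβ₀ : 0 < β₀) (hM : 0 ≤ M)
    (hQ : 0 ≤ Q) (hE : 0 ≤ E) {k : ℕ} (hk : 1 ≤ k) :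
    (1 - δ * cgmStepSize δ (k + 1)) * cgmRate δ β₀ M Q E k
        + cgmStepSize δ (k + 1) ^ 2 * (M + Q / cgmSmoothing β₀ δ (k + 1)) / 2
      ≤ cgmRate δ β₀ M Q E (k + 1) := by
  have hk' : (1 : ℝ) ≤ k := by exact_mod_cast hk
  rw [cgmStepSize_succ]
  simp only [cgmRate, cgmSmoothing]
  set u := δ * k + 2 with hu
  have hu2 : δ + 2 ≤ u := by nlinarith
  have hu0 : 0 < u := by linarith
  have e1 : δ * ((k + 1 : ℕ) : ℝ) + 1 = u + δ - 1 := by push_cast; ring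
  have e2 : δ * ((k + 1 : ℕ) : ℝ) + 2 = u + δ := by push_cast; ring
  rw [e1, e2]
  have hrat := rate_rational_step hδ0 hu2 hM hE
  have hsqrt := mul_le_mul_of_nonneg_left (rate_sqrt_step hδ0 hδ1 hu2) (div_nonneg hQ hβ₀.le)
  have hs : 0 < √u := Real.sqrt_pos.2 (by linarith)
  have ht : 0 < √(u + δ) := Real.sqrt_pos.2 (by linarith)
  have ht' : 0 < √(u + δ - 1) := Real.sqrt_pos.2 (by linarith)
  have e3 : (1 - δ * (2 / u)) * ((2 / δ) * ((M + δ * E) / u + Q / (β₀ * √u)))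
        + (2 / u) ^ 2 * (M + Q / (β₀ / √(u + δ - 1))) / 2
      = ((1 - δ * (2 / u)) * ((2 / δ) * ((M + δ * E) / u)) + (2 / u) ^ 2 * M / 2)
        + Q / β₀ * ((1 - δ * (2 / u)) * ((2 / δ) / √u) + (2 / u) ^ 2 * √(u + δ - 1) / 2) := by
    field_simp
    ring
  have e4 : (2 / δ) * ((M + δ * E) / (u + δ) + Q / (β₀ * √(u + δ)))
      = (2 / δ) * ((M + δ * E) / (u + δ)) + Q / β₀ * ((2 / δ) / √(u + δ)) := by
    field_simp
  rw [e3, e4]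
  exact add_le_add hrat hsqrt

end Schedule

theorem le_cgmRate_of_recursion {δ β₀ M Q E : ℝ} (hδ0 : 0 < δ) (hδ1 : δ ≤ 1) (hβ₀ : 0 < β₀)
    (hM : 0 ≤ M) (hQ : 0 ≤ Q) (hE : 0 ≤ E) {gap gap₀ W : ℕ → ℝ} (hW : ∀ k, 0 ≤ W k)
    (hinit : gap₀ 1 ≤ E)
    (hstep : ∀ k, 1 ≤ k → gap k ≤ (1 - δ * cgmStepSize δ k) * gap₀ k
      - δ * cgmStepSize δ k * W k / (2 * cgmSmoothing β₀ δ k)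
      + cgmStepSize δ k ^ 2 * (M + Q / cgmSmoothing β₀ δ k) / 2)
    (hshift : ∀ k, 1 ≤ k → gap₀ (k + 1) ≤ gap k
      + (cgmSmoothing β₀ δ k - cgmSmoothing β₀ δ (k + 1)) * W (k + 1)
        / (2 * cgmSmoothing β₀ δ (k + 1) ^ 2)) :
    ∀ k, 1 ≤ k → gap k ≤ cgmRate δ β₀ M Q E k := by
  intro k hk
  induction k, hk using Nat.le_induction with
  | base =>
    have h := hstep 1 le_rfl
    rw [cgmStepSize_one, mul_one, one_pow, one_mul] at h
    have hW1 : 0 ≤ δ * W 1 / (2 * cgmSmoothing β₀ δ 1) :=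
      div_nonneg (mul_nonneg hδ0.le (hW 1)) (by linarith [cgmSmoothing_pos hδ0.le hβ₀ 1])
    have hinit' : (1 - δ) * gap₀ 1 ≤ (1 - δ) * E := by gcongr
    linarith [cgmRate_one_ge hδ0 hδ1 hβ₀ hM hQ hE]
  | succ k hk ih =>
    set η := cgmStepSize δ (k + 1)
    set β := cgmSmoothing β₀ δ k
    set β' := cgmSmoothing β₀ δ (k + 1)
    have hβ' : 0 < β' := cgmSmoothing_pos hδ0.le hβ₀ _
    have hη := cgmStepSize_mem_Icc hδ0.le (show 1 ≤ k + 1 by omega)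
    have hδη : 0 ≤ 1 - δ * η := by nlinarith [hη.1, hη.2]
    have hsched : (1 - δ * η) * β ≤ β' :=
      one_sub_mul_cgmStepSize_mul_cgmSmoothing_le hδ0 hδ1 hβ₀ hk
    -- the extra smoothing error from `β' ≤ β` is absorbed by the negative term of the step
    have hcancel : (1 - δ * η) * ((β - β') * W (k + 1) / (2 * β' ^ 2))
        ≤ δ * η * W (k + 1) / (2 * β') := by
      have h := mul_le_mul_of_nonneg_right (show (1 - δ * η) * (β - β') ≤ δ * η * β' by linarith)
        (div_nonneg (hW (k + 1)) (by positivity : (0 : ℝ) ≤ 2 * β' ^ 2))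
      calc _ = (1 - δ * η) * (β - β') * (W (k + 1) / (2 * β' ^ 2)) := by ring
        _ ≤ δ * η * β' * (W (k + 1) / (2 * β' ^ 2)) := h
        _ = _ := by field_simp
    have hprev := mul_le_mul_of_nonneg_left ((hshift k hk).trans (add_le_add_left ih _)) hδη
    linarith [hstep (k + 1) (by omega), cgmRate_succ_ge hδ0 hδ1 hβ₀ hM hQ hE hk]

theorem stmt7_general
    (n d : ℕ)
    (X : Set (EuclideanSpace ℝ (Fin n)))
    (hX_cpt : IsCompact X) (hX_cvx : Convex ℝ X)
    (f : EuclideanSpace ℝ (Fin n) → ℝ)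
    (f' : EuclideanSpace ℝ (Fin n) → EuclideanSpace ℝ (Fin n))
    (hf_cvx : ConvexOn ℝ Set.univ f)
    (hf_grad : ∀ x, HasGradientAt f (f' x) x)
    (L_f : ℝ) (hLf : 0 ≤ L_f)
    (hf'_lip : ∀ x y, ‖f' x - f' y‖ ≤ L_f * ‖x - y‖)
    (A : EuclideanSpace ℝ (Fin n) →L[ℝ] EuclideanSpace ℝ (Fin d))
    (g : EuclideanSpace ℝ (Fin d) → ℝ)
    (hg_cvx : ConvexOn ℝ Set.univ g)
    (prox : ℝ → EuclideanSpace ℝ (Fin d) → EuclideanSpace ℝ (Fin d))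
    (hprox : ∀ β, 0 < β → ∀ z y, g (prox β z) + ‖z - prox β z‖ ^ 2 / (2 * β)
        ≤ g y + ‖z - y‖ ^ 2 / (2 * β))
    (gβ : ℝ → EuclideanSpace ℝ (Fin d) → ℝ)
    (hgβ : ∀ β z, gβ β z = ⨅ y : EuclideanSpace ℝ (Fin d), (g y + ‖z - y‖ ^ 2 / (2 * β)))
    (Fstar : ℝ)
    (hFstar : IsLeast ((fun x => f x + g (A x)) '' X) Fstar)
    (β₀ : ℝ) (hβ₀ : 0 < β₀)
    (δ : ℝ) (hδ0 : 0 < δ) (hδ1 : δ ≤ 1)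
    (x s v : ℕ → EuclideanSpace ℝ (Fin n))
    (hx1 : x 1 ∈ X)
    (hv : ∀ k, 1 ≤ k → v k = (β₀ / Real.sqrt (δ * (k:ℝ) + 1)) • f' (x k)
        + (ContinuousLinearMap.adjoint A) (A (x k) - prox (β₀ / Real.sqrt (δ * (k:ℝ) + 1)) (A (x k))))
    (hs_mem : ∀ k, 1 ≤ k → s k ∈ X)
    (hlmo : ∀ k, 1 ≤ k → ⟪v k, s k - x k⟫ ≤ δ * ⨅ z ∈ X, ⟪v k, z - x k⟫)
    (hupd : ∀ k, 1 ≤ k → x (k + 1) = x k + (2 / (δ * ((k:ℝ) - 1) + 2)) • (s k - x k)) :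
    ∀ k, 1 ≤ k →
      f (x (k + 1)) + gβ (β₀ / Real.sqrt (δ * (k:ℝ) + 1)) (A (x (k + 1))) - Fstar
        ≤ (2 / δ) * (((Metric.diam X) ^ 2 * L_f + δ * (f (x 1) + g (A (x 1)) - Fstar))
              / (δ * (k:ℝ) + 2)
            + (Metric.diam X) ^ 2 * ‖A‖ ^ 2 / (β₀ * Real.sqrt (δ * (k:ℝ) + 2))) := by
  obtain rfl : gβ = moreauEnvelope g := funext fun β => funext (hgβ β)
  obtain ⟨w, hw, rfl⟩ := hFstar.1
  have hβ (k : ℕ) := cgmSmoothing_pos hδ0.le hβ₀ k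
  have hprox' (k : ℕ) (z) : IsProxPoint g (cgmSmoothing β₀ δ k) z (prox _ z) := hprox _ (hβ k) z
  have hmem := hX_cvx.mem_of_add_smul_sub_recursion hx1 hs_mem
    (fun k hk => cgmStepSize_mem_Icc hδ0.le hk) hupd
  have hdiam : ∀ a ∈ X, ∀ b ∈ X, ‖a - b‖ ≤ Metric.diam X := fun a ha b hb =>
    dist_eq_norm a b ▸ Metric.dist_le_diam_of_mem hX_cpt.isBounded ha hb
  refine le_cgmRate_of_recursion
    (gap := fun k => f (x (k + 1)) + moreauEnvelope g (cgmSmoothing β₀ δ k) (A (x (k + 1)))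
      - (f w + g (A w)))
    (gap₀ := fun k => f (x k) + moreauEnvelope g (cgmSmoothing β₀ δ k) (A (x k)) - (f w + g (A w)))
    (W := fun k => ‖A (x k) - prox (cgmSmoothing β₀ δ k) (A (x k))‖ ^ 2) hδ0 hδ1 hβ₀
    (by positivity) (by positivity) (sub_nonneg.2 (hFstar.2 ⟨x 1, hx1, rfl⟩))
    (fun k => sq_nonneg _) ?_ ?_ ?_
  · linarith [(hprox' 1 (A (x 1))).moreauEnvelope_le_self]
  · intro k hk
    have hlmo' := (hlmo k hk).trans <| mul_le_mul_of_nonneg_left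
      (hX_cpt.biInf_le (by fun_prop) hw) hδ0.le
    have := smoothed_gap_le_of_cgm_step hf_cvx hf_grad hf'_lip hLf hg_cvx (hβ k) (hprox' k)
      hδ0.le (cgmStepSize_mem_Icc hδ0.le hk).1 (hv k hk) hlmo'
      (hdiam _ (hs_mem k hk) _ (hmem k hk))
    rw [hupd k hk]
    exact this
  · intro k hk
    have := moreauEnvelope_le_moreauEnvelope_add hg_cvx (hβ (k + 1))
      (cgmSmoothing_succ_le hδ0.le hβ₀ k) (hprox' (k + 1) (A (x (k + 1)))) (hprox' k _)
    linarith

theorem stmt7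
    (n d : ℕ)
    (X : Set (EuclideanSpace ℝ (Fin n)))
    (hX_ne : X.Nonempty) (hX_cpt : IsCompact X) (hX_cvx : Convex ℝ X)
    (f : EuclideanSpace ℝ (Fin n) → ℝ)
    (f' : EuclideanSpace ℝ (Fin n) → EuclideanSpace ℝ (Fin n))
    (hf_cvx : ConvexOn ℝ Set.univ f)
    (hf_grad : ∀ x, HasGradientAt f (f' x) x)
    (L_f : ℝ) (hLf : 0 ≤ L_f)
    (hf'_lip : ∀ x y, ‖f' x - f' y‖ ≤ L_f * ‖x - y‖)
    (A : EuclideanSpace ℝ (Fin n) →L[ℝ] EuclideanSpace ℝ (Fin d))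
    (g : EuclideanSpace ℝ (Fin d) → ℝ)
    (hg_cvx : ConvexOn ℝ Set.univ g)
    (L_g : ℝ) (hLg : 0 < L_g)
    (hg_lip : ∀ z₁ z₂, |g z₁ - g z₂| ≤ L_g * ‖z₁ - z₂‖)
    (prox : ℝ → EuclideanSpace ℝ (Fin d) → EuclideanSpace ℝ (Fin d))
    (hprox : ∀ β, 0 < β → ∀ z y, g (prox β z) + ‖z - prox β z‖ ^ 2 / (2 * β)
        ≤ g y + ‖z - y‖ ^ 2 / (2 * β))
    (gβ : ℝ → EuclideanSpace ℝ (Fin d) → ℝ)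
    (hgβ : ∀ β z, gβ β z = ⨅ y : EuclideanSpace ℝ (Fin d), (g y + ‖z - y‖ ^ 2 / (2 * β)))
    (Fstar : ℝ)
    (hFstar : IsLeast ((fun x => f x + g (A x)) '' X) Fstar)
    (β₀ : ℝ) (hβ₀ : 0 < β₀)
    (δ : ℝ) (hδ0 : 0 < δ) (hδ1 : δ ≤ 1)
    (x s v : ℕ → EuclideanSpace ℝ (Fin n))
    (hx1 : x 1 ∈ X)
    (hv : ∀ k, 1 ≤ k → v k = (β₀ / Real.sqrt (δ * (k:ℝ) + 1)) • f' (x k)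
        + (ContinuousLinearMap.adjoint A) (A (x k) - prox (β₀ / Real.sqrt (δ * (k:ℝ) + 1)) (A (x k))))
    (hs_mem : ∀ k, 1 ≤ k → s k ∈ X)
    (hlmo : ∀ k, 1 ≤ k → ⟪v k, s k - x k⟫ ≤ δ * ⨅ z ∈ X, ⟪v k, z - x k⟫)
    (hupd : ∀ k, 1 ≤ k → x (k + 1) = x k + (2 / (δ * ((k:ℝ) - 1) + 2)) • (s k - x k)) :
    ∀ k, 1 ≤ k →
      f (x (k + 1)) + gβ (β₀ / Real.sqrt (δ * (k:ℝ) + 1)) (A (x (k + 1))) - Fstar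
        ≤ (2 / δ) * (((Metric.diam X) ^ 2 * L_f + δ * (f (x 1) + g (A (x 1)) - Fstar))
              / (δ * (k:ℝ) + 2)
            + (Metric.diam X) ^ 2 * ‖A‖ ^ 2 / (β₀ * Real.sqrt (δ * (k:ℝ) + 2))) :=
  stmt7_general n d X hX_cpt hX_cvx f f' hf_cvx hf_grad L_f hLf hf'_lip A g hg_cvx prox hprox gβ hgβ
    Fstar hFstar β₀ hβ₀ δ hδ0 hδ1 x s v hx1 hv hs_mem hlmo hupd
end

section
/- Under the homotopy CGM with multiplicatively inexact linear minimization oracle of parameter δ ∈ (0,1] and g Lipschitz with constant L_g, for every k ≥ 1 the iterate x_{k+1} satisfies F(x_{k+1}) − F⋆ ≤ (2/δ) ( (D² L_f + δ ℰ)/(δ k + 1) + D² ‖A‖² / (β₀ √(δ k + 1)) ) + β₀ L_g² / (2 √(δ k + 1)), where ℰ = F(x₁) − F⋆. -/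
open RealInnerProductSpace


section aux
variable {d : ℕ}
local notation "Gd" => EuclideanSpace ℝ (Fin d)

/-- subgradient inequality at the prox point -/
lemma prox_subgrad (g : Gd → ℝ) (hg : ConvexOn ℝ Set.univ g)
    (β : ℝ) (hβ : 0 < β) (z p : Gd)
    (hp : ∀ y, g p + ‖z - p‖ ^ 2 / (2 * β) ≤ g y + ‖z - y‖ ^ 2 / (2 * β))
    (y : Gd) : ⟪z - p, y - p⟫ ≤ β * (g y - g p) := by
  have key : ∀ t : ℝ, 0 < t → t ≤ 1 →
      ⟪z - p, y - p⟫ ≤ β * (g y - g p) + t * ‖y - p‖ ^ 2 / 2 := by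
    intro t ht0 ht1
    have hyt := hp (p + t • (y - p))
    have hconv : g (p + t • (y - p)) ≤ (1 - t) * g p + t * g y := by
      have h2 := hg.2 (Set.mem_univ p) (Set.mem_univ y)
        (by linarith : (0:ℝ) ≤ 1 - t) ht0.le (by ring)
      have heq : (1 - t) • p + t • y = p + t • (y - p) := by module
      simpa [heq, smul_eq_mul] using h2
    have hdiff : z - (p + t • (y - p)) = (z - p) - t • (y - p) := by abel
    have hnorm : ‖z - (p + t • (y - p))‖ ^ 2
        = ‖z - p‖ ^ 2 - 2 * (t * ⟪z - p, y - p⟫) + t ^ 2 * ‖y - p‖ ^ 2 := by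
      rw [hdiff, norm_sub_sq_real, real_inner_smul_right, norm_smul]
      simp [Real.norm_eq_abs, mul_pow, sq_abs]
    rw [hnorm] at hyt
    set ip := ⟪z - p, y - p⟫ with hip
    have h2β : (0:ℝ) < 2 * β := by linarith
    have hyt2 : g p * (2 * β) + ‖z - p‖ ^ 2 ≤ g (p + t • (y - p)) * (2 * β)
        + (‖z - p‖ ^ 2 - 2 * (t * ip) + t ^ 2 * ‖y - p‖ ^ 2) := by
      have h2 := mul_le_mul_of_nonneg_right hyt h2β.le
      have e1 : (g p + ‖z - p‖ ^ 2 / (2*β)) * (2*β) = g p * (2*β) + ‖z - p‖ ^ 2 := by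
        field_simp
      have e2 : (g (p + t • (y - p)) + (‖z - p‖ ^ 2 - 2 * (t * ip) + t ^ 2 * ‖y - p‖ ^ 2) / (2*β)) * (2*β)
          = g (p + t • (y - p)) * (2*β) + (‖z - p‖ ^ 2 - 2 * (t * ip) + t ^ 2 * ‖y - p‖ ^ 2) := by
        field_simp
      rw [e1, e2] at h2
      exact h2
    have hconv2 := mul_le_mul_of_nonneg_right hconv h2β.le
    have h3 : t * (2 * β * ip) ≤ t * (2 * β * (β * (g y - g p)) + t * (β * ‖y - p‖ ^ 2)) := by
      nlinarith [hyt2, hconv2]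
    have h4 := le_of_mul_le_mul_left h3 ht0
    have h5 : β * ip ≤ β * (β * (g y - g p) + t * ‖y - p‖ ^ 2 / 2) := by nlinarith [h4]
    have h6 := le_of_mul_le_mul_left h5 hβ
    linarith
  by_contra hcon
  push_neg at hcon
  set ε := ⟪z - p, y - p⟫ - β * (g y - g p) with hε
  have hε0 : 0 < ε := by linarith
  set t := min 1 (ε / (‖y - p‖ ^ 2 + 1)) with htdef
  have hden : (0:ℝ) < ‖y - p‖ ^ 2 + 1 := by positivity
  have ht0 : 0 < t := lt_min one_pos (div_pos hε0 hden)
  have ht1 : t ≤ 1 := min_le_left _ _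
  have h := key t ht0 ht1
  have hlt : t * ‖y - p‖ ^ 2 / 2 < ε := by
    have h1 : t ≤ ε / (‖y - p‖ ^ 2 + 1) := min_le_right _ _
    have h2 : t * ‖y - p‖ ^ 2 ≤ ε / (‖y - p‖ ^ 2 + 1) * ‖y - p‖ ^ 2 :=
      mul_le_mul_of_nonneg_right h1 (sq_nonneg _)
    have h3 : ε / (‖y - p‖ ^ 2 + 1) * ‖y - p‖ ^ 2 < ε := by
      rw [div_mul_eq_mul_div, div_lt_iff₀ hden]
      nlinarith [sq_nonneg ‖y - p‖]
    nlinarith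
  linarith
end aux


section aux2
variable {d : ℕ}
local notation "Gd" => EuclideanSpace ℝ (Fin d)

/-- Moreau gap bound: `g z ≤ G_β(z) + β L²/2`. -/
lemma gap_le (g : Gd → ℝ) (L β : ℝ) (hβ : 0 < β) (z p : Gd)
    (hlip : ∀ z₁ z₂, |g z₁ - g z₂| ≤ L * ‖z₁ - z₂‖) :
    g z ≤ (g p + ‖z - p‖ ^ 2 / (2 * β)) + β * L ^ 2 / 2 := by
  have h1 : g z - g p ≤ L * ‖z - p‖ := (abs_le.1 (hlip z p)).2
  have e : (g p + ‖z - p‖ ^ 2 / (2 * β)) + β * L ^ 2 / 2 - g z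
      = (g p - g z) + (‖z - p‖ ^ 2 + β ^ 2 * L ^ 2) / (2 * β) := by
    field_simp
    ring
  have h2 : L * ‖z - p‖ ≤ (‖z - p‖ ^ 2 + β ^ 2 * L ^ 2) / (2 * β) := by
    rw [le_div_iff₀ (by linarith : (0:ℝ) < 2 * β)]
    nlinarith [sq_nonneg (‖z - p‖ - β * L)]
  linarith

/-- descent property of the Moreau envelope, at a fixed level β. -/
lemma envelope_descent (g : Gd → ℝ) (β : ℝ) (hβ : 0 < β) (z z' p p' : Gd)
    (hp' : ∀ y, g p' + ‖z' - p'‖ ^ 2 / (2 * β) ≤ g y + ‖z' - y‖ ^ 2 / (2 * β)) :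
    g p' + ‖z' - p'‖ ^ 2 / (2 * β) ≤ (g p + ‖z - p‖ ^ 2 / (2 * β))
      + ⟪z - p, z' - z⟫ / β + ‖z' - z‖ ^ 2 / (2 * β) := by
  have h := hp' p
  have hexp : ‖z' - p‖ ^ 2 = ‖z - p‖ ^ 2 + 2 * ⟪z - p, z' - z⟫ + ‖z' - z‖ ^ 2 := by
    have e : z' - p = (z - p) + (z' - z) := by abel
    rw [e, norm_add_sq_real]
  rw [hexp] at h
  have e2 : (‖z - p‖ ^ 2 + 2 * ⟪z - p, z' - z⟫ + ‖z' - z‖ ^ 2) / (2 * β)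
      = ‖z - p‖ ^ 2 / (2 * β) + ⟪z - p, z' - z⟫ / β + ‖z' - z‖ ^ 2 / (2 * β) := by
    field_simp
  rw [e2] at h
  linarith

/-- shift of smoothing level: `G_{β'}(z) ≤ G_β(z) + (β-β') ‖z-p'‖²/(2β'²)` -/
lemma envelope_shift (g : Gd → ℝ) (β β' : ℝ) (hβ' : 0 < β') (hββ' : β' ≤ β)
    (z p p' : Gd)
    (hsub : ⟪z - p', p - p'⟫ ≤ β' * (g p - g p')) :
    g p' + ‖z - p'‖ ^ 2 / (2 * β') ≤ (g p + ‖z - p‖ ^ 2 / (2 * β))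
      + (β - β') * ‖z - p'‖ ^ 2 / (2 * β' ^ 2) := by
  have hβ : 0 < β := lt_of_lt_of_le hβ' hββ'
  have hin : ⟪z - p', p - p'⟫ = ‖z - p'‖ ^ 2 - ⟪z - p', z - p⟫ := by
    have e : p - p' = (z - p') - (z - p) := by abel
    rw [e, inner_sub_right, real_inner_self_eq_norm_sq]
  rw [hin] at hsub
  have hcs := real_inner_le_norm (z - p') (z - p)
  have e : (g p + ‖z - p‖ ^ 2 / (2 * β) + (β - β') * ‖z - p'‖ ^ 2 / (2 * β' ^ 2))
      - (g p' + ‖z - p'‖ ^ 2 / (2 * β'))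
      = (2 * β' ^ 2 * β * (g p - g p') + β' ^ 2 * ‖z - p‖ ^ 2
          + (β - β') * β * ‖z - p'‖ ^ 2 - β' * β * ‖z - p'‖ ^ 2) / (2 * β' ^ 2 * β) := by
    field_simp
    ring
  have h1 := mul_le_mul_of_nonneg_left hsub (by positivity : (0:ℝ) ≤ 2 * β' * β)
  have h2 := mul_le_mul_of_nonneg_left hcs (by positivity : (0:ℝ) ≤ 2 * β' * β)
  have hN : 0 ≤ 2 * β' ^ 2 * β * (g p - g p') + β' ^ 2 * ‖z - p‖ ^ 2
      + (β - β') * β * ‖z - p'‖ ^ 2 - β' * β * ‖z - p'‖ ^ 2 := by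
    nlinarith [h1, h2, sq_nonneg (β * ‖z - p'‖ - β' * ‖z - p‖)]
  have := div_nonneg hN (by positivity : (0:ℝ) ≤ 2 * β' ^ 2 * β)
  linarith

end aux2


section aux3
variable {n : ℕ}
local notation "En" => EuclideanSpace ℝ (Fin n)

lemma line_hasDerivAt (f : En → ℝ) (f' : En → En)
    (hf_grad : ∀ x, HasGradientAt f (f' x) x) (x d : En) (t : ℝ) :
    HasDerivAt (fun t : ℝ => f (x + t • d)) ⟪f' (x + t • d), d⟫ t := by
  have hc : HasDerivAt (fun t : ℝ => x + t • d) d t := by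
    simpa using ((hasDerivAt_id t).smul_const d).const_add x
  have hg := (hf_grad (x + t • d)).hasFDerivAt
  have := hg.comp_hasDerivAt t hc
  simpa [InnerProductSpace.toDual_apply_apply, Function.comp_def] using this

/-- gradient inequality for convex differentiable functions -/
lemma convex_grad_ineq (f : En → ℝ) (f' : En → En)
    (hf_cvx : ConvexOn ℝ Set.univ f)
    (hf_grad : ∀ x, HasGradientAt f (f' x) x) (x y : En) :
    f x + ⟪f' x, y - x⟫ ≤ f y := by
  set d := y - x with hd
  set φ : ℝ → ℝ := fun t => f (x + t • d) with hφ
  have hder : HasDerivAt φ ⟪f' x, d⟫ 0 := by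
    simpa using line_hasDerivAt f f' hf_grad x d 0
  have htend : Filter.Tendsto (slope φ 0) (nhdsWithin 0 (Set.Ioi 0)) (nhds ⟪f' x, d⟫) :=
    (hasDerivAt_iff_tendsto_slope.1 hder).mono_left
      (nhdsWithin_mono 0 (fun t ht => ne_of_gt ht))
  have hev : ∀ᶠ t in nhdsWithin 0 (Set.Ioi 0), slope φ 0 t ≤ f y - f x := by
    filter_upwards [Ioo_mem_nhdsGT_of_mem (by constructor <;> norm_num : (0:ℝ) ∈ Set.Ico 0 1)]
      with t ht
    have ht0 : 0 < t := ht.1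
    have ht1 : t ≤ 1 := ht.2.le
    have h2 := hf_cvx.2 (Set.mem_univ x) (Set.mem_univ y)
      (by linarith : (0:ℝ) ≤ 1 - t) ht0.le (by ring)
    have heq : (1 - t) • x + t • y = x + t • d := by rw [hd]; module
    rw [heq, smul_eq_mul, smul_eq_mul] at h2
    have hφ0 : φ 0 = f x := by simp [hφ]
    rw [slope_def_field, hφ0, sub_zero, div_le_iff₀ ht0]
    have : φ t = f (x + t • d) := rfl
    nlinarith [h2]
  have := le_of_tendsto htend hev
  linarith

/-- descent lemma for L-smooth functions -/
lemma smooth_descent (f : En → ℝ) (f' : En → En) (L : ℝ) (hL : 0 ≤ L)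
    (hf_grad : ∀ x, HasGradientAt f (f' x) x)
    (hlip : ∀ x y, ‖f' x - f' y‖ ≤ L * ‖x - y‖) (x y : En) :
    f y ≤ f x + ⟪f' x, y - x⟫ + L / 2 * ‖y - x‖ ^ 2 := by
  set d := y - x with hd
  set χ : ℝ → ℝ := fun t => f x + t * ⟪f' x, d⟫ + t ^ 2 * (L * ‖d‖ ^ 2) / 2 - f (x + t • d)
    with hχ
  have hderiv : ∀ t : ℝ, HasDerivAt χ
      (⟪f' x, d⟫ + t * (L * ‖d‖ ^ 2) - ⟪f' (x + t • d), d⟫) t := by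
    intro t
    have h1 : HasDerivAt (fun t : ℝ => f x + t * ⟪f' x, d⟫ + t ^ 2 * (L * ‖d‖ ^ 2) / 2)
        (⟪f' x, d⟫ + t * (L * ‖d‖ ^ 2)) t := by
      have ha : HasDerivAt (fun t : ℝ => t * ⟪f' x, d⟫) ⟪f' x, d⟫ t := by
        simpa using (hasDerivAt_id t).mul_const ⟪f' x, d⟫
      have hb : HasDerivAt (fun t : ℝ => t ^ 2 * (L * ‖d‖ ^ 2) / 2)
          (t * (L * ‖d‖ ^ 2)) t := by
        have := ((hasDerivAt_pow 2 t).mul_const (L * ‖d‖ ^ 2)).div_const 2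
        simpa using this.congr_deriv (by push_cast; ring)
      simpa [Pi.add_def] using (ha.const_add (f x)).add hb
    simpa [Pi.sub_def] using h1.sub (line_hasDerivAt f f' hf_grad x d t)
  have hmono : MonotoneOn χ (Set.Icc 0 1) := by
    apply monotoneOn_of_deriv_nonneg (convex_Icc 0 1)
    · exact fun t _ => (hderiv t).continuousAt.continuousWithinAt
    · intro t ht
      exact (hderiv t).differentiableAt.differentiableWithinAt
    · intro t ht
      rw [interior_Icc] at ht
      rw [(hderiv t).deriv]
      have hcs : ⟪f' (x + t • d) - f' x, d⟫ ≤ ‖f' (x + t • d) - f' x‖ * ‖d‖ :=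
        real_inner_le_norm _ _
      have hl := hlip (x + t • d) x
      have hxt : ‖x + t • d - x‖ = t * ‖d‖ := by
        rw [show x + t • d - x = t • d by abel, norm_smul, Real.norm_eq_abs,
          abs_of_pos ht.1]
      rw [hxt] at hl
      have e3 : ⟪f' (x + t • d) - f' x, d⟫ = ⟪f' (x + t • d), d⟫ - ⟪f' x, d⟫ :=
        inner_sub_left _ _ _
      have h4 : ⟪f' (x + t • d), d⟫ - ⟪f' x, d⟫ ≤ L * (t * ‖d‖) * ‖d‖ := by
        rw [← e3]
        calc ⟪f' (x + t • d) - f' x, d⟫ ≤ ‖f' (x + t • d) - f' x‖ * ‖d‖ := hcs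
          _ ≤ L * (t * ‖d‖) * ‖d‖ := mul_le_mul_of_nonneg_right hl (norm_nonneg d)
      nlinarith [h4]
  have h01 := hmono (Set.mem_Icc.2 ⟨le_refl 0, zero_le_one⟩)
    (Set.mem_Icc.2 ⟨zero_le_one, le_refl 1⟩) zero_le_one
  have hχ0 : χ 0 = 0 := by simp [hχ]
  have hχ1 : χ 1 = f x + ⟪f' x, d⟫ + L * ‖d‖ ^ 2 / 2 - f y := by
    simp [hχ, hd]
  rw [hχ0, hχ1] at h01
  have : L / 2 * ‖d‖ ^ 2 = L * ‖d‖ ^ 2 / 2 := by ring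
  rw [hd] at *
  linarith [h01]

end aux3

/-- `√(u+δ) ≤ √u + δ/(2√u)` -/
lemma sqrt_add_le (u δ : ℝ) (hu : 1 ≤ u) (hδ : 0 ≤ δ) :
    Real.sqrt (u + δ) ≤ Real.sqrt u + δ / (2 * Real.sqrt u) := by
  have hu0 : 0 < u := by linarith
  have hs0 : 0 < Real.sqrt u := Real.sqrt_pos.2 hu0
  set s := Real.sqrt u with hs
  have hsq : s ^ 2 = u := Real.sq_sqrt hu0.le
  have hb : u + δ ≤ (s + δ / (2 * s)) ^ 2 := by
    have e : (s + δ / (2 * s)) ^ 2 = s ^ 2 + δ + δ ^ 2 / (4 * s ^ 2) := by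
      field_simp
      ring
    rw [e, hsq]
    have h0 : 0 ≤ δ ^ 2 / (4 * u) := by positivity
    linarith
  calc Real.sqrt (u + δ) ≤ Real.sqrt ((s + δ / (2 * s)) ^ 2) := Real.sqrt_le_sqrt hb
    _ = s + δ / (2 * s) := Real.sqrt_sq (by positivity)

/-- condition on the decay of the smoothing parameter -/
lemma beta_cond (β₀ δ u : ℝ) (hβ₀ : 0 < β₀) (hδ0 : 0 < δ) (hδ1 : δ ≤ 1)
    (hu2 : 1 ≤ u - δ) :
    β₀ / Real.sqrt (u - δ) - β₀ / Real.sqrt u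
      ≤ δ * (2 / (u + 1 - δ)) * (β₀ / Real.sqrt u) := by
  have hu : 1 + δ ≤ u := by linarith
  have hu0 : 0 < u := by linarith
  have hud0 : 0 < u - δ := by linarith
  set s := Real.sqrt u with hs
  set s' := Real.sqrt (u - δ) with hs'
  have hsq : s ^ 2 = u := Real.sq_sqrt hu0.le
  have hsq' : s' ^ 2 = u - δ := Real.sq_sqrt hud0.le
  have hs0 : 0 < s := Real.sqrt_pos.2 hu0
  have hs'0 : 0 < s' := Real.sqrt_pos.2 hud0
  have hs'1 : 1 ≤ s' := by
    nlinarith [hsq', hs'0]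
  have hss' : s' ≤ s := Real.sqrt_le_sqrt (by linarith)
  have hq : 0 < u + 1 - δ := by linarith
  -- key polynomial inequality : (u+1-δ)(s-s') ≤ 2 δ s'
  have hkey : (u + 1 - δ) * (s - s') ≤ 2 * δ * s' := by
    have hfac : (s - s') * (s + s') = δ := by nlinarith [hsq, hsq']
    nlinarith [mul_nonneg (sub_nonneg.2 hss') (sub_nonneg.2 hs'1),
      mul_nonneg (sub_nonneg.2 hss') (sub_nonneg.2 hss'), hfac, hs'0, hs0]
  -- convert to the divided form
  rw [div_sub_div _ _ (ne_of_gt hs'0) (ne_of_gt hs0)]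
  have e : δ * (2 / (u + 1 - δ)) * (β₀ / s) = (2 * δ * β₀) / ((u + 1 - δ) * s) := by
    rw [eq_div_iff (by positivity)]
    field_simp
  rw [e, div_le_div_iff₀ (by positivity) (by positivity)]
  have e2 : (β₀ * s - s' * β₀) = β₀ * (s - s') := by ring
  calc (β₀ * s - s' * β₀) * ((u + 1 - δ) * s) = β₀ * s * ((u + 1 - δ) * (s - s')) := by ring
    _ ≤ β₀ * s * (2 * δ * s') := by
        apply mul_le_mul_of_nonneg_left hkey (by positivity)
    _ = 2 * δ * β₀ * (s' * s) := by ring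

set_option maxHeartbeats 1600000 in
/-- bound on the cumulated sums of `√(δ j + 1)` -/
lemma sum_sqrt_bound (δ : ℝ) (hδ0 : 0 < δ) (hδ1 : δ ≤ 1) :
    ∀ k : ℕ, 1 ≤ k →
      Real.sqrt (δ * k + 1) * (δ * ∑ j ∈ Finset.range k, Real.sqrt (δ * (j + 1) + 1))
        ≤ (δ * ((k : ℝ) - 2) + 2) * (δ * ((k : ℝ) - 1) + 2) := by
  intro k hk
  induction k, hk using Nat.le_induction with
  | base =>
      simp only [Finset.range_one, Finset.sum_singleton]
      push_cast
      have h1 : Real.sqrt (δ * 1 + 1) * (δ * Real.sqrt (δ * (0 + 1) + 1)) = δ * (δ + 1) := by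
        rw [show δ * (0 + 1) + 1 = δ * 1 + 1 by ring]
        rw [show Real.sqrt (δ*1+1) * (δ * Real.sqrt (δ*1+1)) = δ * (Real.sqrt (δ*1+1) * Real.sqrt (δ*1+1)) by ring]
        rw [Real.mul_self_sqrt (by linarith)]
        ring
      rw [h1]
      nlinarith
  | succ k hk ih =>
      set u := δ * k + 1 with hu_def
      have hu : 1 + δ ≤ u := by
        have : (1:ℝ) ≤ (k:ℝ) := by exact_mod_cast hk
        rw [hu_def]; nlinarith
      have hu1 : 1 ≤ u := by linarith
      have hu0 : 0 < u := by linarith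
      set s := Real.sqrt u with hs
      set Ssum := ∑ j ∈ Finset.range k, Real.sqrt (δ * (j + 1) + 1) with hSsum
      have hSsum0 : 0 ≤ Ssum := Finset.sum_nonneg fun j _ => Real.sqrt_nonneg _
      have hsq : s ^ 2 = u := Real.sq_sqrt hu0.le
      have hs0 : 0 < s := Real.sqrt_pos.2 hu0
      have hsum : ∑ j ∈ Finset.range (k+1), Real.sqrt (δ * (j + 1) + 1)
          = Ssum + Real.sqrt (u + δ) := by
        rw [Finset.sum_range_succ, ← hSsum]
        congr 1
        rw [hu_def]
        congr 1
        push_cast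
        ring
      have hnew : Real.sqrt (δ * (k+1 : ℕ) + 1) = Real.sqrt (u + δ) := by
        rw [hu_def]; push_cast; ring_nf
      rw [hsum, hnew]
      set s' := Real.sqrt (u + δ) with hs'
      have hs'le : s' ≤ s + δ / (2 * s) := sqrt_add_le u δ hu1 hδ0.le
      have hsq' : s' ^ 2 = u + δ := Real.sq_sqrt (by linarith)
      have hs'0 : 0 < s' := Real.sqrt_pos.2 (by linarith)
      -- IH in u-language
      have ihu : s * (δ * Ssum) ≤ (u + 1 - 2*δ) * (u + 1 - δ) := by
        have e1 : δ * ((k:ℝ) - 2) + 2 = u + 1 - 2*δ := by rw [hu_def]; ring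
        have e2 : δ * ((k:ℝ) - 1) + 2 = u + 1 - δ := by rw [hu_def]; ring
        rw [← e1, ← e2]
        exact ih
      have hC0 : 0 ≤ (u + 1 - 2*δ) * (u + 1 - δ) := by nlinarith
      -- goal in u-language
      have egoal1 : δ * ((k+1:ℕ) : ℝ) + 1 = u + δ := by rw [hu_def]; push_cast; ring
      have egoal2 : δ * (((k+1:ℕ) : ℝ) - 2) + 2 = u + 1 - δ := by rw [hu_def]; push_cast; ring
      have egoal3 : δ * (((k+1:ℕ) : ℝ) - 1) + 2 = u + 1 := by rw [hu_def]; push_cast; ring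
      rw [egoal2, egoal3]
      -- now: s' * (δ * (Ssum + s')) ≤ (u+1-δ)(u+1)
      have step1 : s' * (δ * Ssum) ≤ (1 + δ/(2*u)) * ((u + 1 - 2*δ) * (u + 1 - δ)) := by
        have h1 : s' * (δ * Ssum) ≤ (s + δ/(2*s)) * (δ * Ssum) :=
          mul_le_mul_of_nonneg_right hs'le (by positivity)
        have e : (s + δ/(2*s)) * (δ * Ssum) = (1 + δ/(2*u)) * (s * (δ * Ssum)) := by
          rw [← hsq]
          field_simp
        rw [e] at h1
        have h2 : (1 + δ/(2*u)) * (s * (δ * Ssum)) ≤ (1 + δ/(2*u)) * ((u + 1 - 2*δ) * (u + 1 - δ)) :=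
          mul_le_mul_of_nonneg_left ihu (by positivity)
        linarith
      have step2 : (1 + δ/(2*u)) * ((u + 1 - 2*δ) * (u + 1 - δ)) + δ * (u + δ)
          ≤ (u + 1 - δ) * (u + 1) := by
        have e : (1 + δ/(2*u)) * ((u + 1 - 2*δ) * (u + 1 - δ))
            = ((2*u + δ) * ((u + 1 - 2*δ) * (u + 1 - δ))) / (2*u) := by
          field_simp
        rw [e, div_add' _ _ _ (by positivity : (2*u:ℝ) ≠ 0), div_le_iff₀ (by positivity)]
        have hw : 0 ≤ u - (1 + δ) := by linarith
        have h1 : 0 ≤ δ * ((u - (1+δ)) * (u - (1+δ))) := mul_nonneg hδ0.le (mul_nonneg hw hw)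
        have h2 : 0 ≤ δ * (u - (1+δ)) * (4 - δ) :=
          mul_nonneg (mul_nonneg hδ0.le hw) (by linarith)
        have h3 : 0 ≤ δ * δ * (1 - δ) := mul_nonneg (mul_nonneg hδ0.le hδ0.le) (by linarith)
        nlinarith [h1, h2, h3, hδ0.le]
      have expand : s' * (δ * (Ssum + s')) = s' * (δ * Ssum) + δ * (u + δ) := by
        have e5 : δ * (u + δ) = δ * s' ^ 2 := by rw [hsq']
        rw [e5]
        ring
      rw [expand]
      exact le_trans (add_le_add_left step1 (δ * (u + δ))) step2


noncomputable def moreauEnv {d : ℕ} (g : EuclideanSpace ℝ (Fin d) → ℝ)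
    (prox : ℝ → EuclideanSpace ℝ (Fin d) → EuclideanSpace ℝ (Fin d))
    (β : ℝ) (z : EuclideanSpace ℝ (Fin d)) : ℝ :=
  g (prox β z) + ‖z - prox β z‖ ^ 2 / (2 * β)

noncomputable def phiF {n d : ℕ} (f : EuclideanSpace ℝ (Fin n) → ℝ)
    (g : EuclideanSpace ℝ (Fin d) → ℝ)
    (prox : ℝ → EuclideanSpace ℝ (Fin d) → EuclideanSpace ℝ (Fin d))
    (A : EuclideanSpace ℝ (Fin n) →L[ℝ] EuclideanSpace ℝ (Fin d))
    (β : ℝ) (y : EuclideanSpace ℝ (Fin n)) : ℝ :=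
  f y + moreauEnv g prox β (A y)

section step
variable {n d : ℕ}

set_option maxHeartbeats 1000000 in
/-- The core one-iteration inequality at a fixed smoothing level `b`. -/
lemma step_ineq
    (f : EuclideanSpace ℝ (Fin n) → ℝ) (f' : EuclideanSpace ℝ (Fin n) → EuclideanSpace ℝ (Fin n))
    (hf_cvx : ConvexOn ℝ Set.univ f)
    (hf_grad : ∀ x, HasGradientAt f (f' x) x)
    (L_f : ℝ) (hLf : 0 ≤ L_f)
    (hf'_lip : ∀ x y, ‖f' x - f' y‖ ≤ L_f * ‖x - y‖)
    (A : EuclideanSpace ℝ (Fin n) →L[ℝ] EuclideanSpace ℝ (Fin d))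
    (g : EuclideanSpace ℝ (Fin d) → ℝ) (hg_cvx : ConvexOn ℝ Set.univ g)
    (prox : ℝ → EuclideanSpace ℝ (Fin d) → EuclideanSpace ℝ (Fin d))
    (b : ℝ) (hb : 0 < b)
    (hproxb : ∀ z y, g (prox b z) + ‖z - prox b z‖ ^ 2 / (2 * b)
        ≤ g y + ‖z - y‖ ^ 2 / (2 * b))
    (δ η D Fstar : ℝ) (hδ0 : 0 < δ) (hη0 : 0 ≤ η) (hD0 : 0 ≤ D)
    (xc sc xn xs : EuclideanSpace ℝ (Fin n))
    (v : EuclideanSpace ℝ (Fin n))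
    (hv : v = b • f' xc + (ContinuousLinearMap.adjoint A) (A xc - prox b (A xc)))
    (hxn : xn = xc + η • (sc - xc))
    (hlmo : ⟪v, sc - xc⟫ ≤ δ * ⟪v, xs - xc⟫)
    (hstar : f xs + g (A xs) = Fstar)
    (hscxc : ‖sc - xc‖ ≤ D) :
    phiF f g prox A b xn - Fstar
      ≤ (1 - δ * η) * (phiF f g prox A b xc - Fstar)
        - δ * η * ‖A xc - prox b (A xc)‖ ^ 2 / (2 * b)
        + η ^ 2 * (D ^ 2 * L_f + D ^ 2 * ‖A‖ ^ 2 / b) / 2 := by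
  set z := A xc with hz
  set p := prox b z with hp
  set r := ‖z - p‖ with hr
  have hΔ : xn - xc = η • (sc - xc) := by rw [hxn]; abel
  have hΔn : ‖xn - xc‖ ≤ η * D := by
    rw [hΔ, norm_smul, Real.norm_eq_abs, abs_of_nonneg hη0]
    exact mul_le_mul_of_nonneg_left hscxc hη0
  -- (a) f-descent
  have ha : f xn ≤ f xc + ⟪f' xc, xn - xc⟫ + L_f / 2 * ‖xn - xc‖ ^ 2 :=
    smooth_descent f f' L_f hLf hf_grad hf'_lip xc xn
  -- (b) envelope descent
  have hbdes : moreauEnv g prox b (A xn) ≤ moreauEnv g prox b z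
      + ⟪z - p, A xn - z⟫ / b + ‖A xn - z‖ ^ 2 / (2 * b) := by
    have := envelope_descent g b hb z (A xn) p (prox b (A xn)) (hproxb (A xn))
    simpa [moreauEnv] using this
  have hAz : A xn - z = A (xn - xc) := by rw [hz, map_sub]
  have hAd : ⟪z - p, A (xn - xc)⟫ = ⟪(ContinuousLinearMap.adjoint A) (z - p), xn - xc⟫ :=
    (ContinuousLinearMap.adjoint_inner_left A _ _).symm
  have hAn : ‖A (xn - xc)‖ ≤ ‖A‖ * (η * D) :=
    le_trans (A.le_opNorm _) (mul_le_mul_of_nonneg_left hΔn (norm_nonneg A))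
  -- inner product with v
  have hvinner : ⟪f' xc, xn - xc⟫ + ⟪(ContinuousLinearMap.adjoint A) (z - p), xn - xc⟫ / b
      = ⟪v, xn - xc⟫ / b := by
    rw [hv, inner_add_left, real_inner_smul_left]
    field_simp
  -- lmo chain
  have hvxs : ⟪v, xs - xc⟫ ≤ b * (Fstar - phiF f g prox A b xc) - r ^ 2 / 2 := by
    have hsub := prox_subgrad g hg_cvx b hb z p (hproxb z) (A xs)
    have hsplit : ⟪z - p, A xs - z⟫ = ⟪z - p, A xs - p⟫ - r ^ 2 := by
      have e : A xs - z = (A xs - p) - (z - p) := by abel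
      rw [e, inner_sub_right, real_inner_self_eq_norm_sq, hr]
    have hgrad := convex_grad_ineq f f' hf_cvx hf_grad xc xs
    have hvxseq : ⟪v, xs - xc⟫ = b * ⟪f' xc, xs - xc⟫ + ⟪z - p, A xs - z⟫ := by
      rw [hv, inner_add_left, real_inner_smul_left,
        ContinuousLinearMap.adjoint_inner_left, map_sub]
    rw [hvxseq, hsplit]
    have h1 : ⟪z - p, A xs - p⟫ ≤ b * (g (A xs) - g p) := hsub
    have h2 : b * ⟪f' xc, xs - xc⟫ ≤ b * (f xs - f xc) :=
      mul_le_mul_of_nonneg_left (by linarith [hgrad]) hb.le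
    have hphi : phiF f g prox A b xc = f xc + (g p + r ^ 2 / (2 * b)) := by
      simp [phiF, moreauEnv, hz, hp, hr]
    rw [hphi]
    have e2 : b * (Fstar - (f xc + (g p + r ^ 2 / (2 * b)))) - r ^ 2 / 2
        = b * (f xs - f xc) + (b * (g (A xs) - g p) - r ^ 2) := by
      rw [← hstar]
      field_simp
      ring
    rw [e2]
    linarith
  have hvs : ⟪v, xn - xc⟫ = η * ⟪v, sc - xc⟫ := by
    rw [hΔ, real_inner_smul_right]
  -- chain for the inner product term
  have hchain : ⟪v, xn - xc⟫ ≤ η * (δ * (b * (Fstar - phiF f g prox A b xc) - r ^ 2 / 2)) := by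
    rw [hvs]
    have h1 : ⟪v, sc - xc⟫ ≤ δ * ⟪v, xs - xc⟫ := hlmo
    have h2 : δ * ⟪v, xs - xc⟫ ≤ δ * (b * (Fstar - phiF f g prox A b xc) - r ^ 2 / 2) :=
      mul_le_mul_of_nonneg_left hvxs hδ0.le
    exact mul_le_mul_of_nonneg_left (le_trans h1 h2) hη0
  have h5 : ⟪v, xn - xc⟫ / b ≤ η * δ * (Fstar - phiF f g prox A b xc)
      - δ * η * r ^ 2 / (2 * b) := by
    have h6 : ⟪v, xn - xc⟫ / b ≤ (η * (δ * (b * (Fstar - phiF f g prox A b xc) - r ^ 2 / 2))) / b := by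
      gcongr
    have e : (η * (δ * (b * (Fstar - phiF f g prox A b xc) - r ^ 2 / 2))) / b
        = η * δ * (Fstar - phiF f g prox A b xc) - δ * η * r ^ 2 / (2 * b) := by
      field_simp
    rw [e] at h6
    exact h6
  -- quadratic bounds
  have hq1 : L_f / 2 * ‖xn - xc‖ ^ 2 ≤ L_f / 2 * (η * D) ^ 2 :=
    mul_le_mul_of_nonneg_left (pow_le_pow_left₀ (norm_nonneg _) hΔn 2) (by linarith)
  have hq2 : ‖A (xn - xc)‖ ^ 2 / (2 * b) ≤ (‖A‖ * (η * D)) ^ 2 / (2 * b) := by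
    gcongr
  -- sum of descents
  have hbdes2 : moreauEnv g prox b (A xn) ≤ moreauEnv g prox b z
      + ⟪(ContinuousLinearMap.adjoint A) (z - p), xn - xc⟫ / b
      + ‖A (xn - xc)‖ ^ 2 / (2 * b) := by
    rw [hAz, hAd] at hbdes
    exact hbdes
  have hphixn : phiF f g prox A b xn = f xn + moreauEnv g prox b (A xn) := rfl
  have hphixc : phiF f g prox A b xc = f xc + moreauEnv g prox b z := rfl
  have hsum : phiF f g prox A b xn ≤ phiF f g prox A b xc + ⟪v, xn - xc⟫ / b
      + L_f / 2 * ‖xn - xc‖ ^ 2 + ‖A (xn - xc)‖ ^ 2 / (2 * b) := by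
    rw [hphixn, hphixc]
    linarith [ha, hbdes2, hvinner]
  -- final algebra
  have e4 : η ^ 2 * (D ^ 2 * L_f + D ^ 2 * ‖A‖ ^ 2 / b) / 2
      = L_f / 2 * (η * D) ^ 2 + (‖A‖ * (η * D)) ^ 2 / (2 * b) := by
    field_simp
  have e5 : (1 - δ * η) * (phiF f g prox A b xc - Fstar)
      = (phiF f g prox A b xc - Fstar) + η * δ * (Fstar - phiF f g prox A b xc) := by ring
  rw [e4, e5]
  linarith [hsum, h5, hq1, hq2]
end step
noncomputable def bet (β₀ δ : ℝ) (k : ℕ) : ℝ := β₀ / Real.sqrt (δ * (k:ℝ) + 1)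

set_option maxHeartbeats 2000000 in
theorem stmt8
    (n d : ℕ)
    (X : Set (EuclideanSpace ℝ (Fin n)))
    (hX_ne : X.Nonempty) (hX_cpt : IsCompact X) (hX_cvx : Convex ℝ X)
    (f : EuclideanSpace ℝ (Fin n) → ℝ)
    (f' : EuclideanSpace ℝ (Fin n) → EuclideanSpace ℝ (Fin n))
    (hf_cvx : ConvexOn ℝ Set.univ f)
    (hf_grad : ∀ x, HasGradientAt f (f' x) x)
    (L_f : ℝ) (hLf : 0 ≤ L_f)
    (hf'_lip : ∀ x y, ‖f' x - f' y‖ ≤ L_f * ‖x - y‖)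
    (A : EuclideanSpace ℝ (Fin n) →L[ℝ] EuclideanSpace ℝ (Fin d))
    (g : EuclideanSpace ℝ (Fin d) → ℝ)
    (hg_cvx : ConvexOn ℝ Set.univ g)
    (L_g : ℝ) (hLg : 0 < L_g)
    (hg_lip : ∀ z₁ z₂, |g z₁ - g z₂| ≤ L_g * ‖z₁ - z₂‖)
    (prox : ℝ → EuclideanSpace ℝ (Fin d) → EuclideanSpace ℝ (Fin d))
    (hprox : ∀ β, 0 < β → ∀ z y, g (prox β z) + ‖z - prox β z‖ ^ 2 / (2 * β)
        ≤ g y + ‖z - y‖ ^ 2 / (2 * β))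
    (gβ : ℝ → EuclideanSpace ℝ (Fin d) → ℝ)
    (hgβ : ∀ β z, gβ β z = ⨅ y : EuclideanSpace ℝ (Fin d), (g y + ‖z - y‖ ^ 2 / (2 * β)))
    (Fstar : ℝ)
    (hFstar : IsLeast ((fun x => f x + g (A x)) '' X) Fstar)
    (β₀ : ℝ) (hβ₀ : 0 < β₀)
    (δ : ℝ) (hδ0 : 0 < δ) (hδ1 : δ ≤ 1)
    (x s v : ℕ → EuclideanSpace ℝ (Fin n))
    (hx1 : x 1 ∈ X)
    (hv : ∀ k, 1 ≤ k → v k = (β₀ / Real.sqrt (δ * (k:ℝ) + 1)) • f' (x k)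
        + (ContinuousLinearMap.adjoint A) (A (x k) - prox (β₀ / Real.sqrt (δ * (k:ℝ) + 1)) (A (x k))))
    (hs_mem : ∀ k, 1 ≤ k → s k ∈ X)
    (hlmo : ∀ k, 1 ≤ k → ⟪v k, s k - x k⟫ ≤ δ * ⨅ z ∈ X, ⟪v k, z - x k⟫)
    (hupd : ∀ k, 1 ≤ k → x (k + 1) = x k + (2 / (δ * ((k:ℝ) - 1) + 2)) • (s k - x k)) :
    ∀ k, 1 ≤ k →
      f (x (k + 1)) + g (A (x (k + 1))) - Fstar
        ≤ (2 / δ) * (((Metric.diam X) ^ 2 * L_f + δ * (f (x 1) + g (A (x 1)) - Fstar))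
              / (δ * (k:ℝ) + 1)
            + (Metric.diam X) ^ 2 * ‖A‖ ^ 2 / (β₀ * Real.sqrt (δ * (k:ℝ) + 1)))
          + β₀ * L_g ^ 2 / (2 * Real.sqrt (δ * (k:ℝ) + 1)) := by
  -- ------------------------------------------------------------------ setup
  obtain ⟨xs, hxsX, hxsval⟩ := hFstar.1
  have hFle : ∀ y ∈ X, Fstar ≤ f y + g (A y) := fun y hy => hFstar.2 ⟨y, hy, rfl⟩
  have hE0 : 0 ≤ f (x 1) + g (A (x 1)) - Fstar := by
    have := hFle (x 1) hx1; linarith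
  have hD0 : (0:ℝ) ≤ Metric.diam X := Metric.diam_nonneg
  have hdiam : ∀ a ∈ X, ∀ b ∈ X, ‖a - b‖ ≤ Metric.diam X := by
    intro a ha c hc
    rw [← dist_eq_norm]
    exact Metric.dist_le_diam_of_mem hX_cpt.isBounded ha hc
  obtain ⟨R, hR⟩ := isBounded_iff_forall_norm_le.1 hX_cpt.isBounded
  have hR0 : 0 ≤ R := le_trans (norm_nonneg _) (hR _ hx1)
  -- sqrt facts
  have husq : ∀ k : ℕ, (0:ℝ) < δ * (k:ℝ) + 1 := by
    intro k; have : (0:ℝ) ≤ (k:ℝ) := Nat.cast_nonneg k; nlinarith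
  have hsqpos : ∀ k : ℕ, 0 < Real.sqrt (δ * (k:ℝ) + 1) := fun k => Real.sqrt_pos.2 (husq k)
  have hbpos : ∀ k : ℕ, 0 < bet β₀ δ k := fun k => div_pos hβ₀ (hsqpos k)
  have hbmono : ∀ k : ℕ, bet β₀ δ (k+1) ≤ bet β₀ δ k := by
    intro k
    apply div_le_div_of_nonneg_left hβ₀.le (hsqpos k)
    apply Real.sqrt_le_sqrt
    push_cast
    nlinarith [hδ0.le]
  have hqpos : ∀ k : ℕ, 1 ≤ k → (0:ℝ) < δ * ((k:ℝ) - 1) + 2 := by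
    intro k hk
    have : (1:ℝ) ≤ (k:ℝ) := by exact_mod_cast hk
    nlinarith
  have hetapos : ∀ k : ℕ, 1 ≤ k → (0:ℝ) ≤ 2 / (δ * ((k:ℝ) - 1) + 2) :=
    fun k hk => le_of_lt (div_pos two_pos (hqpos k hk))
  have hetale1 : ∀ k : ℕ, 1 ≤ k → 2 / (δ * ((k:ℝ) - 1) + 2) ≤ 1 := by
    intro k hk
    rw [div_le_one (hqpos k hk)]
    have : (1:ℝ) ≤ (k:ℝ) := by exact_mod_cast hk
    nlinarith
  -- ------------------------------------------------------------ membership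
  have hmem : ∀ k : ℕ, 1 ≤ k → x k ∈ X := by
    intro k hk
    induction k, hk using Nat.le_induction with
    | base => exact hx1
    | succ k hk ih =>
        rw [hupd k hk]
        have heq : x k + (2 / (δ * ((k:ℝ) - 1) + 2)) • (s k - x k)
            = (1 - 2 / (δ * ((k:ℝ) - 1) + 2)) • x k + (2 / (δ * ((k:ℝ) - 1) + 2)) • s k := by
          module
        rw [heq]
        exact hX_cvx ih (hs_mem k hk) (by linarith [hetale1 k hk]) (hetapos k hk) (by ring)
  -- -------------------------------------------------------------- lmo chain
  have hlmo2 : ∀ k : ℕ, 1 ≤ k → ⟪v k, s k - x k⟫ ≤ δ * ⟪v k, xs - x k⟫ := by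
    intro k hk
    refine le_trans (hlmo k hk) (mul_le_mul_of_nonneg_left ?_ hδ0.le)
    have hbdd : BddBelow (Set.range fun z => ⨅ _ : z ∈ X, ⟪v k, z - x k⟫) := by
      refine ⟨-(‖v k‖ * (R + ‖x k‖)) - 1, ?_⟩
      rintro w ⟨z, rfl⟩
      show -(‖v k‖ * (R + ‖x k‖)) - 1 ≤ ⨅ _ : z ∈ X, ⟪v k, z - x k⟫
      by_cases hz : z ∈ X
      · rw [ciInf_pos hz]
        have h1 : |⟪v k, z - x k⟫| ≤ ‖v k‖ * ‖z - x k‖ := abs_real_inner_le_norm _ _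
        have h2 : ‖z - x k‖ ≤ R + ‖x k‖ :=
          le_trans (norm_sub_le _ _) (add_le_add (hR z hz) le_rfl)
        have h3 : ‖v k‖ * ‖z - x k‖ ≤ ‖v k‖ * (R + ‖x k‖) :=
          mul_le_mul_of_nonneg_left h2 (norm_nonneg _)
        have h4 := neg_abs_le ⟪v k, z - x k⟫
        linarith
      · haveI : IsEmpty (z ∈ X) := ⟨hz⟩
        rw [Real.iInf_of_isEmpty]
        have : (0:ℝ) ≤ ‖v k‖ * (R + ‖x k‖) := by positivity
        linarith
    calc (⨅ z ∈ X, ⟪v k, z - x k⟫) ≤ ⨅ _ : xs ∈ X, ⟪v k, xs - x k⟫ := ciInf_le hbdd xs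
      _ = ⟪v k, xs - x k⟫ := ciInf_pos hxsX
  -- -------------------------------------------------------------- the step
  have hstep : ∀ k : ℕ, 1 ≤ k →
      phiF f g prox A (bet β₀ δ k) (x (k+1)) - Fstar
        ≤ (1 - δ * (2 / (δ * ((k:ℝ) - 1) + 2)))
            * (phiF f g prox A (bet β₀ δ k) (x k) - Fstar)
          - δ * (2 / (δ * ((k:ℝ) - 1) + 2))
              * ‖A (x k) - prox (bet β₀ δ k) (A (x k))‖ ^ 2 / (2 * bet β₀ δ k)
          + (2 / (δ * ((k:ℝ) - 1) + 2)) ^ 2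
              * ((Metric.diam X) ^ 2 * L_f + (Metric.diam X) ^ 2 * ‖A‖ ^ 2 / bet β₀ δ k) / 2 := by
    intro k hk
    exact step_ineq f f' hf_cvx hf_grad L_f hLf hf'_lip A g hg_cvx prox
      (bet β₀ δ k) (hbpos k) (hprox _ (hbpos k)) δ (2 / (δ * ((k:ℝ) - 1) + 2))
      (Metric.diam X) Fstar hδ0 (hetapos k hk) hD0
      (x k) (s k) (x (k+1)) xs (v k) (hv k hk) (hupd k hk) (hlmo2 k hk) hxsval
      (hdiam (s k) (hs_mem k hk) (x k) (hmem k hk))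
  -- ---------------------------------------------------------------- shift
  have hshift : ∀ k : ℕ,
      phiF f g prox A (bet β₀ δ (k+1)) (x (k+1))
        ≤ phiF f g prox A (bet β₀ δ k) (x (k+1))
          + (bet β₀ δ k - bet β₀ δ (k+1))
              * ‖A (x (k+1)) - prox (bet β₀ δ (k+1)) (A (x (k+1)))‖ ^ 2
              / (2 * (bet β₀ δ (k+1)) ^ 2) := by
    intro k
    have hsub := prox_subgrad g hg_cvx (bet β₀ δ (k+1)) (hbpos (k+1)) (A (x (k+1)))
      (prox (bet β₀ δ (k+1)) (A (x (k+1)))) (hprox _ (hbpos (k+1)) (A (x (k+1))))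
      (prox (bet β₀ δ k) (A (x (k+1))))
    have h := envelope_shift g (bet β₀ δ k) (bet β₀ δ (k+1)) (hbpos (k+1)) (hbmono k)
      (A (x (k+1))) (prox (bet β₀ δ k) (A (x (k+1))))
      (prox (bet β₀ δ (k+1)) (A (x (k+1)))) hsub
    simp only [phiF, moreauEnv]
    linarith [h]
  -- --------------------------------------------------- beta decay condition
  have hbc : ∀ k : ℕ, 1 ≤ k →
      bet β₀ δ k - bet β₀ δ (k+1) ≤ δ * (2 / (δ * (k:ℝ) + 2)) * bet β₀ δ (k+1) := by
    intro k hk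
    have hk1 : (1:ℝ) ≤ (k:ℝ) := by exact_mod_cast hk
    have h := beta_cond β₀ δ (δ * ((k+1:ℕ):ℝ) + 1) hβ₀ hδ0 hδ1
      (by push_cast; nlinarith)
    have e1 : δ * ((k+1:ℕ):ℝ) + 1 - δ = δ * (k:ℝ) + 1 := by push_cast; ring
    have e2 : δ * ((k+1:ℕ):ℝ) + 1 + 1 - δ = δ * (k:ℝ) + 2 := by push_cast; ring
    rw [e1, e2] at h
    simpa only [bet] using h
  -- ------------------------------------------------------------- recursion
  have hrec : ∀ k : ℕ, 1 ≤ k →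
      phiF f g prox A (bet β₀ δ (k+1)) (x (k+2)) - Fstar
        ≤ (1 - δ * (2 / (δ * (k:ℝ) + 2)))
            * (phiF f g prox A (bet β₀ δ k) (x (k+1)) - Fstar)
          + (2 / (δ * (k:ℝ) + 2)) ^ 2
              * ((Metric.diam X) ^ 2 * L_f
                + (Metric.diam X) ^ 2 * ‖A‖ ^ 2 / bet β₀ δ (k+1)) / 2 := by
    intro k hk
    have hstep' := hstep (k+1) (by omega)
    have heta : δ * (((k+1:ℕ):ℝ) - 1) + 2 = δ * (k:ℝ) + 2 := by push_cast; ring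
    rw [heta] at hstep'
    have hq2pos : (0:ℝ) < δ * (k:ℝ) + 2 := by positivity
    have hδη : δ * (2 / (δ * (k:ℝ) + 2)) ≤ 1 := by
      rw [show δ * (2 / (δ * (k:ℝ) + 2)) = 2 * δ / (δ * (k:ℝ) + 2) by ring,
        div_le_one hq2pos]
      have : (0:ℝ) ≤ (k:ℝ) := Nat.cast_nonneg k
      nlinarith
    have hδη0 : 0 ≤ δ * (2 / (δ * (k:ℝ) + 2)) := by positivity
    have hsh := hshift k
    -- abbreviation facts
    have hr2 : (0:ℝ) ≤ ‖A (x (k+1)) - prox (bet β₀ δ (k+1)) (A (x (k+1)))‖ ^ 2 := sq_nonneg _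
    have hb' := hbpos (k+1)
    have k1 : (bet β₀ δ k - bet β₀ δ (k+1))
          * ‖A (x (k+1)) - prox (bet β₀ δ (k+1)) (A (x (k+1)))‖ ^ 2
        ≤ (δ * (2 / (δ * (k:ℝ) + 2)) * bet β₀ δ (k+1))
          * ‖A (x (k+1)) - prox (bet β₀ δ (k+1)) (A (x (k+1)))‖ ^ 2 :=
      mul_le_mul_of_nonneg_right (hbc k hk) hr2
    have k2 : (bet β₀ δ k - bet β₀ δ (k+1))
          * ‖A (x (k+1)) - prox (bet β₀ δ (k+1)) (A (x (k+1)))‖ ^ 2 / (2 * (bet β₀ δ (k+1)) ^ 2)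
        ≤ (δ * (2 / (δ * (k:ℝ) + 2)) * bet β₀ δ (k+1))
          * ‖A (x (k+1)) - prox (bet β₀ δ (k+1)) (A (x (k+1)))‖ ^ 2 / (2 * (bet β₀ δ (k+1)) ^ 2) :=
      (div_le_div_iff_of_pos_right (by positivity)).2 k1
    have e : (δ * (2 / (δ * (k:ℝ) + 2)) * bet β₀ δ (k+1))
          * ‖A (x (k+1)) - prox (bet β₀ δ (k+1)) (A (x (k+1)))‖ ^ 2 / (2 * (bet β₀ δ (k+1)) ^ 2)
        = δ * (2 / (δ * (k:ℝ) + 2))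
          * ‖A (x (k+1)) - prox (bet β₀ δ (k+1)) (A (x (k+1)))‖ ^ 2 / (2 * bet β₀ δ (k+1)) := by
      field_simp
    have k3 : (0:ℝ) ≤ (bet β₀ δ k - bet β₀ δ (k+1))
          * ‖A (x (k+1)) - prox (bet β₀ δ (k+1)) (A (x (k+1)))‖ ^ 2 / (2 * (bet β₀ δ (k+1)) ^ 2) :=
      div_nonneg (mul_nonneg (sub_nonneg.2 (hbmono k)) hr2) (by positivity)
    have key : (1 - δ * (2 / (δ * (k:ℝ) + 2)))
          * ((bet β₀ δ k - bet β₀ δ (k+1))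
              * ‖A (x (k+1)) - prox (bet β₀ δ (k+1)) (A (x (k+1)))‖ ^ 2
              / (2 * (bet β₀ δ (k+1)) ^ 2))
        ≤ δ * (2 / (δ * (k:ℝ) + 2))
          * ‖A (x (k+1)) - prox (bet β₀ δ (k+1)) (A (x (k+1)))‖ ^ 2 / (2 * bet β₀ δ (k+1)) := by
      have t1 : (1 - δ * (2 / (δ * (k:ℝ) + 2)))
            * ((bet β₀ δ k - bet β₀ δ (k+1))
              * ‖A (x (k+1)) - prox (bet β₀ δ (k+1)) (A (x (k+1)))‖ ^ 2
              / (2 * (bet β₀ δ (k+1)) ^ 2))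
          ≤ 1 * ((bet β₀ δ k - bet β₀ δ (k+1))
              * ‖A (x (k+1)) - prox (bet β₀ δ (k+1)) (A (x (k+1)))‖ ^ 2
              / (2 * (bet β₀ δ (k+1)) ^ 2)) :=
        mul_le_mul_of_nonneg_right (by linarith) k3
      rw [one_mul] at t1
      calc _ ≤ _ := t1
        _ ≤ _ := le_of_le_of_eq k2 e
    have m2 : (1 - δ * (2 / (δ * (k:ℝ) + 2)))
          * (phiF f g prox A (bet β₀ δ (k+1)) (x (k+1)) - Fstar)
        ≤ (1 - δ * (2 / (δ * (k:ℝ) + 2)))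
          * ((phiF f g prox A (bet β₀ δ k) (x (k+1)) - Fstar)
            + (bet β₀ δ k - bet β₀ δ (k+1))
              * ‖A (x (k+1)) - prox (bet β₀ δ (k+1)) (A (x (k+1)))‖ ^ 2
              / (2 * (bet β₀ δ (k+1)) ^ 2)) :=
      mul_le_mul_of_nonneg_left (by linarith [hsh]) (by linarith)
    have e2 : (1 - δ * (2 / (δ * (k:ℝ) + 2)))
          * ((phiF f g prox A (bet β₀ δ k) (x (k+1)) - Fstar)
            + (bet β₀ δ k - bet β₀ δ (k+1))
              * ‖A (x (k+1)) - prox (bet β₀ δ (k+1)) (A (x (k+1)))‖ ^ 2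
              / (2 * (bet β₀ δ (k+1)) ^ 2))
        = (1 - δ * (2 / (δ * (k:ℝ) + 2)))
            * (phiF f g prox A (bet β₀ δ k) (x (k+1)) - Fstar)
          + (1 - δ * (2 / (δ * (k:ℝ) + 2)))
            * ((bet β₀ δ k - bet β₀ δ (k+1))
              * ‖A (x (k+1)) - prox (bet β₀ δ (k+1)) (A (x (k+1)))‖ ^ 2
              / (2 * (bet β₀ δ (k+1)) ^ 2)) := by ring
    rw [e2] at m2
    linarith [hstep', m2, key]
  -- ------------------------------------------------------------------ base
  have hbase : phiF f g prox A (bet β₀ δ 1) (x 2) - Fstar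
      ≤ (1 - δ) * (f (x 1) + g (A (x 1)) - Fstar)
        + ((Metric.diam X) ^ 2 * L_f + (Metric.diam X) ^ 2 * ‖A‖ ^ 2 / bet β₀ δ 1) / 2 := by
    have h := hstep 1 le_rfl
    have e : δ * (((1:ℕ):ℝ) - 1) + 2 = 2 := by norm_num
    rw [e] at h
    norm_num at h
    have hg0 : phiF f g prox A (bet β₀ δ 1) (x 1) ≤ f (x 1) + g (A (x 1)) := by
      have h2 := hprox (bet β₀ δ 1) (hbpos 1) (A (x 1)) (A (x 1))
      simp only [sub_self, norm_zero] at h2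
      norm_num at h2
      simp only [phiF, moreauEnv]
      linarith
    have hmul : (1 - δ) * (phiF f g prox A (bet β₀ δ 1) (x 1) - Fstar)
        ≤ (1 - δ) * (f (x 1) + g (A (x 1)) - Fstar) :=
      mul_le_mul_of_nonneg_left (by linarith) (by linarith)
    have hneg : (0:ℝ) ≤ δ * ‖A (x 1) - prox (bet β₀ δ 1) (A (x 1))‖ ^ 2 / (2 * bet β₀ δ 1) := by
      have := hbpos 1
      positivity
    linarith [h, hmul, hneg]
  -- ---------------------------------------------------------- the induction
  have hInd : ∀ k : ℕ, 1 ≤ k →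
      (δ * ((k:ℝ) - 2) + 2) * (δ * ((k:ℝ) - 1) + 2)
          * (phiF f g prox A (bet β₀ δ k) (x (k+1)) - Fstar)
        ≤ 2 * ((2 - δ) * (1 - δ) * (f (x 1) + g (A (x 1)) - Fstar)
            + (k:ℝ) * ((Metric.diam X) ^ 2 * L_f)
            + ((Metric.diam X) ^ 2 * ‖A‖ ^ 2 / β₀)
              * ∑ j ∈ Finset.range k, Real.sqrt (δ * ((j:ℝ) + 1) + 1)) := by
    intro k hk
    induction k, hk using Nat.le_induction with
    | base =>
        have e1 : δ * (((1:ℕ):ℝ) - 2) + 2 = 2 - δ := by push_cast; ring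
        have e2 : δ * (((1:ℕ):ℝ) - 1) + 2 = 2 := by norm_num
        rw [e1, e2, Finset.range_one, Finset.sum_singleton]
        have hb1 : (Metric.diam X) ^ 2 * ‖A‖ ^ 2 / bet β₀ δ 1
            = ((Metric.diam X) ^ 2 * ‖A‖ ^ 2 / β₀) * Real.sqrt (δ * ((1:ℕ):ℝ) + 1) := by
          rw [bet, div_div_eq_mul_div]
          ring
        have es : Real.sqrt (δ * (((0:ℕ):ℝ) + 1) + 1) = Real.sqrt (δ * ((1:ℕ):ℝ) + 1) := by
          norm_num
        rw [es]
        have hmul := mul_le_mul_of_nonneg_left hbase (by linarith : (0:ℝ) ≤ (2 - δ) * 2)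
        have hWnn : 0 ≤ ((Metric.diam X) ^ 2 * ‖A‖ ^ 2 / β₀) * Real.sqrt (δ * ((1:ℕ):ℝ) + 1) := by
          positivity
        have hPnn : (0:ℝ) ≤ (Metric.diam X) ^ 2 * L_f := by positivity
        rw [hb1] at hmul
        nlinarith [hmul, hWnn, hPnn, hE0, hδ0.le, hδ1]
    | succ k hk ih =>
        have hrk := hrec k hk
        have hk1 : (1:ℝ) ≤ (k:ℝ) := by exact_mod_cast hk
        have e3 : δ * (((k+1:ℕ):ℝ) - 2) + 2 = δ * ((k:ℝ) - 1) + 2 := by push_cast; ring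
        have e4 : δ * (((k+1:ℕ):ℝ) - 1) + 2 = δ * (k:ℝ) + 2 := by push_cast; ring
        rw [e3, e4]
        have hq1' : (0:ℝ) < δ * ((k:ℝ) - 1) + 2 := by
          nlinarith [mul_nonneg hδ0.le (sub_nonneg.2 hk1)]
        have hq2 : (0:ℝ) < δ * (k:ℝ) + 2 := by positivity
        have hMpos : (0:ℝ) < (δ * ((k:ℝ) - 1) + 2) * (δ * (k:ℝ) + 2) := mul_pos hq1' hq2
        have hmul := mul_le_mul_of_nonneg_left hrk hMpos.le
        have hMc : (δ * ((k:ℝ) - 1) + 2) * (δ * (k:ℝ) + 2) * ((1 - δ * (2 / (δ * (k:ℝ) + 2)))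
              * (phiF f g prox A (bet β₀ δ k) (x (k+1)) - Fstar))
            = (δ * ((k:ℝ) - 2) + 2) * (δ * ((k:ℝ) - 1) + 2)
              * (phiF f g prox A (bet β₀ δ k) (x (k+1)) - Fstar) := by
          field_simp
          ring
        have hW' : (Metric.diam X) ^ 2 * ‖A‖ ^ 2 / bet β₀ δ (k+1)
            = ((Metric.diam X) ^ 2 * ‖A‖ ^ 2 / β₀) * Real.sqrt (δ * ((k+1:ℕ):ℝ) + 1) := by
          rw [bet, div_div_eq_mul_div]
          ring
        have hWnn : (0:ℝ) ≤ (Metric.diam X) ^ 2 * L_f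
            + (Metric.diam X) ^ 2 * ‖A‖ ^ 2 / bet β₀ δ (k+1) := by
          have h9 := hbpos (k+1)
          positivity
        have hMq : (δ * ((k:ℝ) - 1) + 2) * (δ * (k:ℝ) + 2) * ((2 / (δ * (k:ℝ) + 2)) ^ 2
              * ((Metric.diam X) ^ 2 * L_f + (Metric.diam X) ^ 2 * ‖A‖ ^ 2 / bet β₀ δ (k+1)) / 2)
            ≤ 2 * ((Metric.diam X) ^ 2 * L_f
              + (Metric.diam X) ^ 2 * ‖A‖ ^ 2 / bet β₀ δ (k+1)) := by
          have efrac : (δ * ((k:ℝ) - 1) + 2) * (δ * (k:ℝ) + 2) * ((2 / (δ * (k:ℝ) + 2)) ^ 2 / 2)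
              = 2 * (δ * ((k:ℝ) - 1) + 2) / (δ * (k:ℝ) + 2) := by
            field_simp
          have hle2 : 2 * (δ * ((k:ℝ) - 1) + 2) / (δ * (k:ℝ) + 2) ≤ 2 := by
            rw [div_le_iff₀ hq2]
            nlinarith
          have estep : (δ * ((k:ℝ) - 1) + 2) * (δ * (k:ℝ) + 2) * ((2 / (δ * (k:ℝ) + 2)) ^ 2
                * ((Metric.diam X) ^ 2 * L_f + (Metric.diam X) ^ 2 * ‖A‖ ^ 2 / bet β₀ δ (k+1)) / 2)
              = ((δ * ((k:ℝ) - 1) + 2) * (δ * (k:ℝ) + 2) * ((2 / (δ * (k:ℝ) + 2)) ^ 2 / 2))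
                * ((Metric.diam X) ^ 2 * L_f + (Metric.diam X) ^ 2 * ‖A‖ ^ 2 / bet β₀ δ (k+1)) := by
            ring
          rw [estep, efrac]
          exact mul_le_mul_of_nonneg_right hle2 hWnn
        have hsum2 : ∑ j ∈ Finset.range (k+1), Real.sqrt (δ * ((j:ℝ) + 1) + 1)
            = (∑ j ∈ Finset.range k, Real.sqrt (δ * ((j:ℝ) + 1) + 1))
              + Real.sqrt (δ * ((k+1:ℕ):ℝ) + 1) := by
          rw [Finset.sum_range_succ]
          congr 1
          push_cast
          ring
        rw [hsum2]
        have hdist : (δ * ((k:ℝ) - 1) + 2) * (δ * (k:ℝ) + 2)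
              * ((1 - δ * (2 / (δ * (k:ℝ) + 2)))
                  * (phiF f g prox A (bet β₀ δ k) (x (k+1)) - Fstar)
                + (2 / (δ * (k:ℝ) + 2)) ^ 2
                  * ((Metric.diam X) ^ 2 * L_f
                    + (Metric.diam X) ^ 2 * ‖A‖ ^ 2 / bet β₀ δ (k+1)) / 2)
            = (δ * ((k:ℝ) - 1) + 2) * (δ * (k:ℝ) + 2) * ((1 - δ * (2 / (δ * (k:ℝ) + 2)))
                  * (phiF f g prox A (bet β₀ δ k) (x (k+1)) - Fstar))
              + (δ * ((k:ℝ) - 1) + 2) * (δ * (k:ℝ) + 2) * ((2 / (δ * (k:ℝ) + 2)) ^ 2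
                  * ((Metric.diam X) ^ 2 * L_f
                    + (Metric.diam X) ^ 2 * ‖A‖ ^ 2 / bet β₀ δ (k+1)) / 2) := by ring
        rw [hdist, hMc, hW'] at hmul
        rw [hW'] at hMq
        push_cast at hmul hMq ih ⊢
        linarith [hmul, hMq, ih]
  -- -------------------------------------------------------------- epilogue
  intro k hk
  have hk1 : (1:ℝ) ≤ (k:ℝ) := by exact_mod_cast hk
  have hind := hInd k hk
  have hsqb := sum_sqrt_bound δ hδ0 hδ1 k hk
  have hu := husq k
  have hs := hsqpos k
  have hpairpos : (0:ℝ) < (δ * ((k:ℝ) - 2) + 2) * (δ * ((k:ℝ) - 1) + 2) := by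
    have h1 : (0:ℝ) < δ * ((k:ℝ) - 2) + 2 := by nlinarith
    have h2 : (0:ℝ) < δ * ((k:ℝ) - 1) + 2 := by
      nlinarith [mul_nonneg hδ0.le (sub_nonneg.2 hk1)]
    exact mul_pos h1 h2
  -- the Moreau gap
  have hgap : g (A (x (k+1)))
      ≤ moreauEnv g prox (bet β₀ δ k) (A (x (k+1))) + bet β₀ δ k * L_g ^ 2 / 2 := by
    have := gap_le g L_g (bet β₀ δ k) (hbpos k) (A (x (k+1)))
      (prox (bet β₀ δ k) (A (x (k+1)))) hg_lip
    simpa [moreauEnv] using this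
  have hbL : bet β₀ δ k * L_g ^ 2 / 2 = β₀ * L_g ^ 2 / (2 * Real.sqrt (δ * (k:ℝ) + 1)) := by
    rw [bet]
    field_simp
  -- bound on `T k` coming from the induction
  have hB : 2 * ((2 - δ) * (1 - δ) * (f (x 1) + g (A (x 1)) - Fstar)
        + (k:ℝ) * ((Metric.diam X) ^ 2 * L_f)
        + ((Metric.diam X) ^ 2 * ‖A‖ ^ 2 / β₀)
          * ∑ j ∈ Finset.range k, Real.sqrt (δ * ((j:ℝ) + 1) + 1))
      ≤ ((2 / δ) * (((Metric.diam X) ^ 2 * L_f + δ * (f (x 1) + g (A (x 1)) - Fstar))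
            / (δ * (k:ℝ) + 1)
          + (Metric.diam X) ^ 2 * ‖A‖ ^ 2 / (β₀ * Real.sqrt (δ * (k:ℝ) + 1))))
        * ((δ * ((k:ℝ) - 2) + 2) * (δ * ((k:ℝ) - 1) + 2)) := by
    have hP0' : (0:ℝ) ≤ (Metric.diam X) ^ 2 * L_f := by positivity
    have hQ0' : (0:ℝ) ≤ (Metric.diam X) ^ 2 * ‖A‖ ^ 2 / β₀ := by positivity
    have hδk : (0:ℝ) ≤ δ * ((k:ℝ) - 1) := mul_nonneg hδ0.le (by linarith)
    have p1 : (2 - δ) * (1 - δ) * (δ * (k:ℝ) + 1)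
        ≤ (δ * ((k:ℝ) - 2) + 2) * (δ * ((k:ℝ) - 1) + 2) := by
      nlinarith [hδk, mul_nonneg hδk (by linarith : (0:ℝ) ≤ 1 - δ),
        mul_nonneg hδk (by linarith : (0:ℝ) ≤ 2 - δ),
        mul_nonneg (mul_nonneg hδ0.le hδ0.le) (by linarith : (0:ℝ) ≤ (k:ℝ) - 1),
        mul_nonneg (by linarith : (0:ℝ) ≤ 1 - δ) (by linarith : (0:ℝ) ≤ 2 - δ),
        mul_nonneg (mul_nonneg hδk hδk) hδ0.le]
    have p2 : (k:ℝ) * (δ * (δ * (k:ℝ) + 1))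
        ≤ (δ * ((k:ℝ) - 2) + 2) * (δ * ((k:ℝ) - 1) + 2) := by
      nlinarith [hδk, mul_nonneg hδk (by linarith : (0:ℝ) ≤ 1 - δ),
        mul_nonneg (by linarith : (0:ℝ) ≤ 1 - δ) (by linarith : (0:ℝ) ≤ 2 - δ),
        mul_nonneg hδk hδk]
    have hd1 : (2 - δ) * (1 - δ)
        ≤ (δ * ((k:ℝ) - 2) + 2) * (δ * ((k:ℝ) - 1) + 2) / (δ * (k:ℝ) + 1) :=
      (le_div_iff₀ hu).2 p1
    have hd2 : (k:ℝ)
        ≤ (δ * ((k:ℝ) - 2) + 2) * (δ * ((k:ℝ) - 1) + 2) / (δ * (δ * (k:ℝ) + 1)) :=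
      (le_div_iff₀ (mul_pos hδ0 hu)).2 p2
    have hd3 : (∑ j ∈ Finset.range k, Real.sqrt (δ * ((j:ℝ) + 1) + 1))
        ≤ (δ * ((k:ℝ) - 2) + 2) * (δ * ((k:ℝ) - 1) + 2)
          / (δ * Real.sqrt (δ * (k:ℝ) + 1)) := by
      refine (le_div_iff₀ (mul_pos hδ0 hs)).2 ?_
      have e : (∑ j ∈ Finset.range k, Real.sqrt (δ * ((j:ℝ) + 1) + 1))
            * (δ * Real.sqrt (δ * (k:ℝ) + 1))
          = Real.sqrt (δ * (k:ℝ) + 1)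
            * (δ * ∑ j ∈ Finset.range k, Real.sqrt (δ * ((j:ℝ) + 1) + 1)) := by ring
      rw [e]
      exact hsqb
    have t1 : 2 * ((2 - δ) * (1 - δ) * (f (x 1) + g (A (x 1)) - Fstar))
        ≤ 2 * (f (x 1) + g (A (x 1)) - Fstar)
          * ((δ * ((k:ℝ) - 2) + 2) * (δ * ((k:ℝ) - 1) + 2) / (δ * (k:ℝ) + 1)) := by
      nlinarith [mul_nonneg hE0 (sub_nonneg.2 hd1)]
    have t2 : 2 * ((k:ℝ) * ((Metric.diam X) ^ 2 * L_f))
        ≤ 2 * ((Metric.diam X) ^ 2 * L_f)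
          * ((δ * ((k:ℝ) - 2) + 2) * (δ * ((k:ℝ) - 1) + 2) / (δ * (δ * (k:ℝ) + 1))) := by
      nlinarith [mul_nonneg hP0' (sub_nonneg.2 hd2)]
    have t3 : 2 * (((Metric.diam X) ^ 2 * ‖A‖ ^ 2 / β₀)
          * ∑ j ∈ Finset.range k, Real.sqrt (δ * ((j:ℝ) + 1) + 1))
        ≤ 2 * ((Metric.diam X) ^ 2 * ‖A‖ ^ 2 / β₀)
          * ((δ * ((k:ℝ) - 2) + 2) * (δ * ((k:ℝ) - 1) + 2)
            / (δ * Real.sqrt (δ * (k:ℝ) + 1))) := by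
      nlinarith [mul_nonneg hQ0' (sub_nonneg.2 hd3)]
    have eB : ((2 / δ) * (((Metric.diam X) ^ 2 * L_f + δ * (f (x 1) + g (A (x 1)) - Fstar))
            / (δ * (k:ℝ) + 1)
          + (Metric.diam X) ^ 2 * ‖A‖ ^ 2 / (β₀ * Real.sqrt (δ * (k:ℝ) + 1))))
          * ((δ * ((k:ℝ) - 2) + 2) * (δ * ((k:ℝ) - 1) + 2))
        = 2 * (f (x 1) + g (A (x 1)) - Fstar)
            * ((δ * ((k:ℝ) - 2) + 2) * (δ * ((k:ℝ) - 1) + 2) / (δ * (k:ℝ) + 1))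
          + 2 * ((Metric.diam X) ^ 2 * L_f)
            * ((δ * ((k:ℝ) - 2) + 2) * (δ * ((k:ℝ) - 1) + 2) / (δ * (δ * (k:ℝ) + 1)))
          + 2 * ((Metric.diam X) ^ 2 * ‖A‖ ^ 2 / β₀)
            * ((δ * ((k:ℝ) - 2) + 2) * (δ * ((k:ℝ) - 1) + 2)
              / (δ * Real.sqrt (δ * (k:ℝ) + 1))) := by
      field_simp
      ring
    rw [eB]
    linarith [t1, t2, t3]
  have hT : (phiF f g prox A (bet β₀ δ k) (x (k+1)) - Fstar)
      ≤ (2 / δ) * (((Metric.diam X) ^ 2 * L_f + δ * (f (x 1) + g (A (x 1)) - Fstar))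
            / (δ * (k:ℝ) + 1)
          + (Metric.diam X) ^ 2 * ‖A‖ ^ 2 / (β₀ * Real.sqrt (δ * (k:ℝ) + 1))) := by
    have h1 : (phiF f g prox A (bet β₀ δ k) (x (k+1)) - Fstar)
        * ((δ * ((k:ℝ) - 2) + 2) * (δ * ((k:ℝ) - 1) + 2))
        ≤ 2 * ((2 - δ) * (1 - δ) * (f (x 1) + g (A (x 1)) - Fstar)
            + (k:ℝ) * ((Metric.diam X) ^ 2 * L_f)
            + ((Metric.diam X) ^ 2 * ‖A‖ ^ 2 / β₀)
              * ∑ j ∈ Finset.range k, Real.sqrt (δ * ((j:ℝ) + 1) + 1)) := by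
      calc (phiF f g prox A (bet β₀ δ k) (x (k+1)) - Fstar)
            * ((δ * ((k:ℝ) - 2) + 2) * (δ * ((k:ℝ) - 1) + 2))
          = (δ * ((k:ℝ) - 2) + 2) * (δ * ((k:ℝ) - 1) + 2)
            * (phiF f g prox A (bet β₀ δ k) (x (k+1)) - Fstar) := by ring
        _ ≤ _ := hind
    have h2 := (le_div_iff₀ hpairpos).2 h1
    refine le_trans h2 ?_
    rw [div_le_iff₀ hpairpos]
    exact hB
  have hphi : phiF f g prox A (bet β₀ δ k) (x (k+1))
      = f (x (k+1)) + moreauEnv g prox (bet β₀ δ k) (A (x (k+1))) := rfl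
  rw [hphi] at hT
  linarith [hgap, hT, hbL.ge, hbL.le]
end

section
/- For all z₁, z₂ ∈ G: g_β(z₁) ≥ g_β(z₂) + (1/β) ⟪z₂ − prox_{βg}(z₂), z₁ − z₂⟫ + (1/(2β)) ‖(z₂ − prox_{βg}(z₂)) − (z₁ − prox_{βg}(z₁))‖². -/
/-!
If `p` minimizes `y ↦ g y + ‖z - y‖² / (2β)` with `g` convex, then comparing `p` with the points
`p + t • (y - p)` and letting `t → 0⁺` shows that `(z - p) / β` is a subgradient of `g` at `p`.
Since the Moreau envelope is attained at the proximal point, this subgradient inequality at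
`p = prox z₂`, evaluated at `y = prox z₁`, leaves only the expansion of
`‖(z₂ - prox z₂) - (z₁ - prox z₁)‖²`.
-/

open RealInnerProductSpace Filter Topology

lemma nonpos_of_forall_le_mul {a b : ℝ} (h : ∀ t : ℝ, 0 < t → t ≤ 1 → a ≤ t * b) : a ≤ 0 := by
  have hlim : Tendsto (fun t : ℝ => t * b) (𝓝[>] 0) (𝓝 0) :=
    ((continuous_mul_const b).tendsto' 0 0 (zero_mul b)).mono_left nhdsWithin_le_nhds
  refine ge_of_tendsto hlim ?_
  filter_upwards [Ioo_mem_nhdsGT (zero_lt_one' ℝ)] with t ht using h t ht.1 ht.2.le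

lemma ConvexOn.add_inner_le_of_isMinOn_add_norm_sq {E : Type*} [NormedAddCommGroup E]
    [InnerProductSpace ℝ E] {g : E → ℝ} {s : Set E} (hg : ConvexOn ℝ s g) {β : ℝ} {z p : E}
    (hp : p ∈ s)
    (hmin : IsMinOn (fun y => g y + ‖z - y‖ ^ 2 / (2 * β)) s p) {y : E} (hy : y ∈ s) :
    g p + (1 / β) * ⟪z - p, y - p⟫ ≤ g y := by
  suffices g p + (1 / β) * ⟪z - p, y - p⟫ - g y ≤ 0 by linarith
  refine nonpos_of_forall_le_mul (b := ‖y - p‖ ^ 2 / (2 * β)) fun t ht ht1 => ?_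
  have hconv : g ((1 - t) • p + t • y) ≤ (1 - t) * g p + t * g y :=
    hg.2 hp hy (by linarith) ht.le (by ring)
  have hcomp : g p + ‖z - p‖ ^ 2 / (2 * β)
      ≤ g ((1 - t) • p + t • y) + ‖z - ((1 - t) • p + t • y)‖ ^ 2 / (2 * β) :=
    hmin (hg.1 hp hy (by linarith) ht.le (by ring))
  have hshift : z - ((1 - t) • p + t • y) = (z - p) - t • (y - p) := by module
  rw [hshift, norm_sub_sq_real (z - p), real_inner_smul_right, norm_smul, Real.norm_eq_abs, mul_pow,
    sq_abs] at hcomp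
  have key : t * (g p + (1 / β) * ⟪z - p, y - p⟫ - g y) ≤ t * (t * (‖y - p‖ ^ 2 / (2 * β))) := by
    linear_combination hcomp + hconv
  exact le_of_mul_le_mul_left key ht

theorem stmt11_general
    (d : ℕ)
    (g : EuclideanSpace ℝ (Fin d) → ℝ)
    (hg_cvx : ConvexOn ℝ Set.univ g)
    (β : ℝ)
    (gβ : EuclideanSpace ℝ (Fin d) → ℝ)
    (hgβ : ∀ z, gβ z = ⨅ y : EuclideanSpace ℝ (Fin d), (g y + ‖z - y‖ ^ 2 / (2 * β)))
    (prox : EuclideanSpace ℝ (Fin d) → EuclideanSpace ℝ (Fin d))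
    (hprox : ∀ z y, g (prox z) + ‖z - prox z‖ ^ 2 / (2 * β) ≤ g y + ‖z - y‖ ^ 2 / (2 * β)) :
    ∀ z₁ z₂ : EuclideanSpace ℝ (Fin d),
      gβ z₁ ≥ gβ z₂ + (1 / β) * ⟪z₂ - prox z₂, z₁ - z₂⟫
        + (1 / (2 * β)) * ‖(z₂ - prox z₂) - (z₁ - prox z₁)‖ ^ 2 := by
  have henv : ∀ z, gβ z = g (prox z) + ‖z - prox z‖ ^ 2 / (2 * β) := fun z =>
    (hgβ z).trans <| ciInf_eq_of_forall_ge_of_forall_gt_exists_lt (hprox z) fun _ hw => ⟨_, hw⟩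
  intro z₁ z₂
  rw [henv, henv, ge_iff_le]
  set p₁ := prox z₁
  set p₂ := prox z₂
  have hsubgrad := hg_cvx.add_inner_le_of_isMinOn_add_norm_sq (Set.mem_univ p₂)
    (isMinOn_univ_iff.mpr (hprox z₂)) (Set.mem_univ p₁)
  have hinner : ⟪z₂ - p₂, z₁ - z₂⟫ = ⟪z₂ - p₂, z₁ - p₁⟫ - ‖z₂ - p₂‖ ^ 2 + ⟪z₂ - p₂, p₁ - p₂⟫ := by
    rw [show z₁ - z₂ = ((z₁ - p₁) - (z₂ - p₂)) + (p₁ - p₂) by abel, inner_add_right,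
      inner_sub_right, real_inner_self_eq_norm_sq]
  calc _ = g p₂ + (1 / β) * ⟪z₂ - p₂, p₁ - p₂⟫ + ‖z₁ - p₁‖ ^ 2 / (2 * β) := by
        rw [norm_sub_sq_real (z₂ - p₂), hinner]
        ring
    _ ≤ g p₁ + ‖z₁ - p₁‖ ^ 2 / (2 * β) := by gcongr

theorem stmt11
    (d : ℕ)
    (g : EuclideanSpace ℝ (Fin d) → ℝ)
    (hg_cvx : ConvexOn ℝ Set.univ g)
    (L : ℝ) (hL : 0 < L)
    (hg_lip : ∀ z₁ z₂, |g z₁ - g z₂| ≤ L * ‖z₁ - z₂‖)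
    (β : ℝ) (hβ : 0 < β)
    (gβ : EuclideanSpace ℝ (Fin d) → ℝ)
    (hgβ : ∀ z, gβ z = ⨅ y : EuclideanSpace ℝ (Fin d), (g y + ‖z - y‖ ^ 2 / (2 * β)))
    (prox : EuclideanSpace ℝ (Fin d) → EuclideanSpace ℝ (Fin d))
    (hprox : ∀ z y, g (prox z) + ‖z - prox z‖ ^ 2 / (2 * β) ≤ g y + ‖z - y‖ ^ 2 / (2 * β)) :
    ∀ z₁ z₂ : EuclideanSpace ℝ (Fin d),
      gβ z₁ ≥ gβ z₂ + (1 / β) * ⟪z₂ - prox z₂, z₁ - z₂⟫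
        + (1 / (2 * β)) * ‖(z₂ - prox z₂) - (z₁ - prox z₁)‖ ^ 2 :=
  stmt11_general d g hg_cvx β gβ hgβ prox hprox
end

section
/- For all 0 < β ≤ γ and every z ∈ G: g_β(z) ≤ g_γ(z) + ((γ − β)/(2β²)) ‖z − prox_{βg}(z)‖². -/
open RealInnerProductSpace

/-! Testing the optimality of `p = prox_{βg}(z)` against the points `p + t • (y - p)` and using
convexity of `g`, then letting `t → 0`, gives the subgradient inequality
`g p + ⟪z - p, y - p⟫ / β ≤ g y`. Writing `y - p = (z - p) - (z - y)` and applying Young's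
inequality `⟪z - p, z - y⟫ / β ≤ γ ‖z - p‖² / (2β²) + ‖z - y‖² / (2γ)` bounds every term of the
infimum defining `g_γ(z)` below by `g p + ‖z - p‖² / (2β) - (γ - β) / (2β²) ‖z - p‖²`, while
`g_β(z) ≤ g p + ‖z - p‖² / (2β)`. -/

section Prox

variable {E : Type*} [NormedAddCommGroup E] [InnerProductSpace ℝ E] {g : E → ℝ} {β : ℝ} {z p : E}

theorem two_real_inner_le_mul_sq_add_inv_mul_sq (v w : E) {γ : ℝ} (hγ : 0 < γ) :
    2 * ⟪v, w⟫ ≤ γ * ‖v‖ ^ 2 + γ⁻¹ * ‖w‖ ^ 2 := by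
  have := two_mul_le_add_mul_sq (a := ‖v‖) (b := ‖w‖) hγ
  nlinarith [real_inner_le_norm v w]

theorem ConvexOn.add_inner_div_le_add_mul_of_prox (hg : ConvexOn ℝ Set.univ g) (hβ : 0 < β)
    (hp : ∀ y, g p + ‖z - p‖ ^ 2 / (2 * β) ≤ g y + ‖z - y‖ ^ 2 / (2 * β))
    (y : E) {t : ℝ} (ht₀ : 0 < t) (ht₁ : t ≤ 1) :
    g p + ⟪z - p, y - p⟫ / β ≤ g y + t * (‖y - p‖ ^ 2 / (2 * β)) := by
  have hconv : g (p + t • (y - p)) ≤ (1 - t) * g p + t * g y := by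
    rw [show p + t • (y - p) = (1 - t) • p + t • y by module]
    exact hg.2 (Set.mem_univ p) (Set.mem_univ y) (sub_nonneg.2 ht₁) ht₀.le (by ring)
  have hnorm : ‖z - (p + t • (y - p))‖ ^ 2
      = ‖z - p‖ ^ 2 - 2 * t * ⟪z - p, y - p⟫ + t ^ 2 * ‖y - p‖ ^ 2 := by
    rw [show z - (p + t • (y - p)) = (z - p) - t • (y - p) by abel, norm_sub_sq_real,
      real_inner_smul_right, norm_smul, mul_pow, Real.norm_eq_abs, sq_abs]
    ring
  have hmin := hp (p + t • (y - p))
  rw [hnorm] at hmin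
  have h_scaled : t * (g p + ⟪z - p, y - p⟫ / β) ≤ t * (g y + t * (‖y - p‖ ^ 2 / (2 * β))) := by
    have h_expand : (‖z - p‖ ^ 2 - 2 * t * ⟪z - p, y - p⟫ + t ^ 2 * ‖y - p‖ ^ 2) / (2 * β)
        = ‖z - p‖ ^ 2 / (2 * β) - t * (⟪z - p, y - p⟫ / β) + t * (t * (‖y - p‖ ^ 2 / (2 * β))) := by
      field_simp
    linarith
  exact le_of_mul_le_mul_left h_scaled ht₀

theorem ConvexOn.add_inner_div_le_of_prox (hg : ConvexOn ℝ Set.univ g) (hβ : 0 < β)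
    (hp : ∀ y, g p + ‖z - p‖ ^ 2 / (2 * β) ≤ g y + ‖z - y‖ ^ 2 / (2 * β)) (y : E) :
    g p + ⟪z - p, y - p⟫ / β ≤ g y := by
  have hlim : Filter.Tendsto (fun t : ℝ ↦ g y + t * (‖y - p‖ ^ 2 / (2 * β)))
      (nhdsWithin 0 (Set.Ioi 0)) (nhds (g y)) := by
    have : Continuous (fun t : ℝ ↦ g y + t * (‖y - p‖ ^ 2 / (2 * β))) := by fun_prop
    simpa using this.continuousWithinAt.tendsto (x := 0) (s := Set.Ioi 0)
  refine ge_of_tendsto hlim ?_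
  filter_upwards [Ioo_mem_nhdsGT zero_lt_one] with t ht
  exact hg.add_inner_div_le_add_mul_of_prox hβ hp y ht.1 ht.2.le

theorem ConvexOn.sub_mul_sq_le_moreau_objective_of_prox (hg : ConvexOn ℝ Set.univ g) (hβ : 0 < β)
    (hp : ∀ y, g p + ‖z - p‖ ^ 2 / (2 * β) ≤ g y + ‖z - y‖ ^ 2 / (2 * β))
    {γ : ℝ} (hγ : 0 < γ) (y : E) :
    g p + ‖z - p‖ ^ 2 / (2 * β) - (γ - β) / (2 * β ^ 2) * ‖z - p‖ ^ 2
      ≤ g y + ‖z - y‖ ^ 2 / (2 * γ) := by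
  have hsub := hg.add_inner_div_le_of_prox hβ hp y
  have hyoung := two_real_inner_le_mul_sq_add_inv_mul_sq (β⁻¹ • (z - p)) (z - y) hγ
  rw [real_inner_smul_left, norm_smul, mul_pow, norm_inv, Real.norm_eq_abs, abs_of_pos hβ] at hyoung
  have hsplit : ⟪z - p, y - p⟫ = ‖z - p‖ ^ 2 - ⟪z - p, z - y⟫ := by
    rw [show y - p = (z - p) - (z - y) by abel, inner_sub_right, real_inner_self_eq_norm_sq]
  rw [hsplit] at hsub
  have h_rearrange : g p + ‖z - p‖ ^ 2 / (2 * β) - (γ - β) / (2 * β ^ 2) * ‖z - p‖ ^ 2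
      = g p + (‖z - p‖ ^ 2 - ⟪z - p, z - y⟫) / β
        + (β⁻¹ * ⟪z - p, z - y⟫ - γ * (β⁻¹ ^ 2 * ‖z - p‖ ^ 2) / 2) := by
    field_simp; ring
  rw [h_rearrange]
  linear_combination hsub + hyoung / 2

end Prox

theorem stmt13_general
    (d : ℕ)
    (g : EuclideanSpace ℝ (Fin d) → ℝ)
    (hg_cvx : ConvexOn ℝ Set.univ g)
    (gβ : ℝ → EuclideanSpace ℝ (Fin d) → ℝ)
    (hgβ : ∀ β, 0 < β → ∀ z, gβ β z = ⨅ y : EuclideanSpace ℝ (Fin d), (g y + ‖z - y‖ ^ 2 / (2 * β)))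
    (prox : ℝ → EuclideanSpace ℝ (Fin d) → EuclideanSpace ℝ (Fin d))
    (hprox : ∀ β, 0 < β → ∀ z y, g (prox β z) + ‖z - prox β z‖ ^ 2 / (2 * β)
        ≤ g y + ‖z - y‖ ^ 2 / (2 * β)) :
    ∀ β γ : ℝ, 0 < β → β ≤ γ → ∀ z : EuclideanSpace ℝ (Fin d),
      gβ β z ≤ gβ γ z + ((γ - β) / (2 * β ^ 2)) * ‖z - prox β z‖ ^ 2 := by
  intro β γ hβ hβγ z
  have hγ : 0 < γ := hβ.trans_le hβγ
  have hp := hprox β hβ z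
  have h_upper : gβ β z ≤ g (prox β z) + ‖z - prox β z‖ ^ 2 / (2 * β) := by
    rw [hgβ β hβ z]
    exact ciInf_le ⟨_, Set.forall_mem_range.2 hp⟩ (prox β z)
  have h_lower : g (prox β z) + ‖z - prox β z‖ ^ 2 / (2 * β)
      - (γ - β) / (2 * β ^ 2) * ‖z - prox β z‖ ^ 2 ≤ gβ γ z := by
    rw [hgβ γ hγ z]
    exact le_ciInf (hg_cvx.sub_mul_sq_le_moreau_objective_of_prox hβ hp hγ)
  linarith

theorem stmt13
    (d : ℕ)
    (g : EuclideanSpace ℝ (Fin d) → ℝ)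
    (hg_cvx : ConvexOn ℝ Set.univ g)
    (L : ℝ) (hL : 0 < L)
    (hg_lip : ∀ z₁ z₂, |g z₁ - g z₂| ≤ L * ‖z₁ - z₂‖)
    (gβ : ℝ → EuclideanSpace ℝ (Fin d) → ℝ)
    (hgβ : ∀ β, 0 < β → ∀ z, gβ β z = ⨅ y : EuclideanSpace ℝ (Fin d), (g y + ‖z - y‖ ^ 2 / (2 * β)))
    (prox : ℝ → EuclideanSpace ℝ (Fin d) → EuclideanSpace ℝ (Fin d))
    (hprox : ∀ β, 0 < β → ∀ z y, g (prox β z) + ‖z - prox β z‖ ^ 2 / (2 * β)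
        ≤ g y + ‖z - y‖ ^ 2 / (2 * β)) :
    ∀ β γ : ℝ, 0 < β → β ≤ γ → ∀ z : EuclideanSpace ℝ (Fin d),
      gβ β z ≤ gβ γ z + ((γ - β) / (2 * β ^ 2)) * ‖z - prox β z‖ ^ 2 :=
  stmt13_general d g hg_cvx gβ hgβ prox hprox
end

section
/- Let δ ∈ (0,1] and C > 0, and let E : ℕ → ℝ be a sequence with E 1 ≥ 0 such that for every k ≥ 1, E (k+1) ≤ (1 − δ η_k) E k + (η_k²/2) C, where η_k = 2/(δ(k−1)+2). Then for every k ≥ 1, E k ≤ 2 (C/δ + E 1) / (δ(k−1) + 2). -/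
open RealInnerProductSpace

/-!
Induction on `k` with the bound itself as invariant: for any `A ≥ 0` with `C ≤ δ A` and
`E 1 ≤ A`, the denominators `d_k = δ (k - 1) + 2` grow by `δ` per step, and one step of the
recursion maps the bound `2 A / d_k` below `2 A / (d_k + δ)`. The theorem is the case
`A = C / δ + E 1`.
-/

/-- Clearing denominators, this reduces to `C (d + δ) ≤ δ A (d + 2δ)`, which follows from
`C ≤ δ A` and `A ≥ 0`. -/
theorem step_le_two_mul_div_add {δ C A d e : ℝ} (hδ : 0 < δ) (hd : 2 * δ ≤ d) (hA : 0 ≤ A)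
    (hCA : C ≤ δ * A) (he : e ≤ 2 * A / d) :
    (1 - δ * (2 / d)) * e + (2 / d) ^ 2 / 2 * C ≤ 2 * A / (d + δ) := by
  have hd0 : 0 < d := by linarith
  have hcontract : 0 ≤ 1 - δ * (2 / d) := by
    rw [sub_nonneg, show δ * (2 / d) = 2 * δ / d by ring, div_le_one hd0]
    exact hd
  have hbound : (1 - δ * (2 / d)) * (2 * A / d) + (2 / d) ^ 2 / 2 * C ≤ 2 * A / (d + δ) := by
    rw [show (1 - δ * (2 / d)) * (2 * A / d) + (2 / d) ^ 2 / 2 * C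
        = 2 * ((d - 2 * δ) * A + C) / d ^ 2 by field_simp,
      div_le_div_iff₀ (by positivity) (by positivity)]
    nlinarith [mul_nonneg hA (sq_nonneg δ), mul_le_mul_of_nonneg_right hCA (by positivity : 0 ≤ d + δ)]
  calc (1 - δ * (2 / d)) * e + (2 / d) ^ 2 / 2 * C
      ≤ (1 - δ * (2 / d)) * (2 * A / d) + (2 / d) ^ 2 / 2 * C := by gcongr
    _ ≤ 2 * A / (d + δ) := hbound

theorem le_two_mul_div_of_recursion {δ C A : ℝ} (hδ0 : 0 < δ) (hδ1 : δ ≤ 1) (hA : 0 ≤ A)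
    (hCA : C ≤ δ * A) {E : ℕ → ℝ} (hE1 : E 1 ≤ A)
    (hrec : ∀ k : ℕ, 1 ≤ k →
      E (k + 1) ≤ (1 - δ * (2 / (δ * ((k:ℝ) - 1) + 2))) * E k
        + ((2 / (δ * ((k:ℝ) - 1) + 2)) ^ 2 / 2) * C) :
    ∀ k : ℕ, 1 ≤ k → E k ≤ 2 * A / (δ * ((k:ℝ) - 1) + 2) := by
  intro k hk
  induction k, hk using Nat.le_induction with
  | base => norm_num; exact hE1
  | succ n hn ih =>
    have hd : 2 * δ ≤ δ * ((n:ℝ) - 1) + 2 := by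
      have : (1:ℝ) ≤ n := by exact_mod_cast hn
      nlinarith
    calc E (n + 1) ≤ _ := hrec n hn
      _ ≤ 2 * A / (δ * ((n:ℝ) - 1) + 2 + δ) := step_le_two_mul_div_add hδ0 hd hA hCA ih
      _ = 2 * A / (δ * (((n + 1 : ℕ) : ℝ) - 1) + 2) := by push_cast; ring_nf

theorem stmt16 (δ C : ℝ) (hδ0 : 0 < δ) (hδ1 : δ ≤ 1) (hC : 0 < C)
    (E : ℕ → ℝ) (hE1 : 0 ≤ E 1)
    (hrec : ∀ k : ℕ, 1 ≤ k →
      E (k + 1) ≤ (1 - δ * (2 / (δ * ((k:ℝ) - 1) + 2))) * E k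
        + ((2 / (δ * ((k:ℝ) - 1) + 2)) ^ 2 / 2) * C) :
    ∀ k : ℕ, 1 ≤ k → E k ≤ 2 * (C / δ + E 1) / (δ * ((k:ℝ) - 1) + 2) := by
  have hCδ : 0 ≤ C / δ := by positivity
  refine le_two_mul_div_of_recursion hδ0 hδ1 (by positivity) ?_ (by linarith) hrec
  rw [mul_add, mul_div_cancel₀ _ hδ0.ne']
  exact le_add_of_nonneg_right (by positivity)
end

section
/- For every β₀ > 0, every δ ∈ (0,1], and every natural number k ≥ 1, with η_k = 2/(δ(k−1)+2) and β_j = β₀/√(δ j + 1): (1 − δ η_k)(β_{k−1} − β_k) ≤ δ η_k β_k, i.e., (1 − 2δ/(δ(k−1)+2)) · (β₀/√(δ(k−1)+1) − β₀/√(δ k + 1)) ≤ (2δ/(δ(k−1)+2)) · β₀/√(δ k + 1). -/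
open RealInnerProductSpace

theorem stmt18 (β₀ δ : ℝ) (hβ₀ : 0 < β₀) (hδ0 : 0 < δ) (hδ1 : δ ≤ 1)
    (k : ℕ) (hk : 1 ≤ k) :
    (1 - 2 * δ / (δ * ((k:ℝ) - 1) + 2))
        * (β₀ / Real.sqrt (δ * ((k:ℝ) - 1) + 1) - β₀ / Real.sqrt (δ * (k:ℝ) + 1))
      ≤ (2 * δ / (δ * ((k:ℝ) - 1) + 2)) * (β₀ / Real.sqrt (δ * (k:ℝ) + 1)) := by
  have hk1 : (1:ℝ) ≤ (k:ℝ) := by exact_mod_cast hk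
  set A : ℝ := δ * ((k:ℝ) - 1) + 1 with hA
  have hA1 : 1 ≤ A := by nlinarith
  have hB : δ * (k:ℝ) + 1 = A + δ := by ring
  rw [hB]
  have hApos : 0 < A := by linarith
  have hBpos : 0 < A + δ := by linarith
  set sa := Real.sqrt A with hsa
  set sb := Real.sqrt (A + δ) with hsb
  have hsa2 : sa ^ 2 = A := Real.sq_sqrt hApos.le
  have hsb2 : sb ^ 2 = A + δ := Real.sq_sqrt hBpos.le
  have hsapos : 0 < sa := Real.sqrt_pos.mpr hApos
  have hsbpos : 0 < sb := Real.sqrt_pos.mpr hBpos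
  have hle : sa ≤ sb := Real.sqrt_le_sqrt (by linarith)
  have hden : δ * ((k:ℝ) - 1) + 2 = A + 1 := by ring
  rw [hden]
  have hA1pos : (0:ℝ) < A + 1 := by linarith
  -- key squared inequality
  have key : (A + 1 - 2 * δ) * sb ≤ (A + 1) * sa := by
    have h1 : 0 ≤ A + 1 - 2 * δ := by nlinarith
    nlinarith [sq_nonneg ((A + 1 - 2*δ) * sb - (A+1) * sa), sq_nonneg (sb - sa),
      mul_pos hsapos hsbpos, sq_nonneg (sb + sa)]
  have hfrac : (1 - 2 * δ / (A + 1)) * (1 / sa) ≤ 1 / sb := by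
    rw [mul_one_div, div_le_div_iff₀ hsapos hsbpos]
    have h3 : (1 - 2 * δ / (A + 1)) * sb = ((A + 1 - 2 * δ) * sb) / (A + 1) := by
      field_simp
    rw [h3, div_le_iff₀ hA1pos]
    nlinarith [key]
  have h2δ : 0 ≤ 2 * δ / (A + 1) := by positivity
  have expand : (1 - 2 * δ / (A + 1)) * (β₀ / sa - β₀ / sb) - (2 * δ / (A + 1)) * (β₀ / sb)
      = β₀ * ((1 - 2 * δ / (A + 1)) * (1 / sa) - 1 / sb) := by ring
  nlinarith [mul_le_mul_of_nonneg_left hfrac hβ₀.le]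
end
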